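/- arXiv:2504.15775 — 6 statements merged into one kernel-verified Lean document; each statement's English description precedes it below -/
import Mathlib

section
/- Let R be a commutative ring in which every maximal ideal is finitely generated. Then R is a quasi V-ring if and only if R is a Kasch ring. -/
universe u v w v'

section LeftDefs
variable (R : Type u) [Ring R]

/-- A (left) `R`-module `M` is mininjective if every homomorphism from a minimal (left)
ideal `I` of `R` into `M` extends to a homomorphism `R → M`. -/
def IsMininjectiveLeft (M : Type v) [AddCommGroup M] [Module R M] : Prop :=
  ∀ I : Submodule R R, IsAtom I → ∀ f : ↥I →ₗ[R] M,
    ∃ g : R →ₗ[R] M, ∀ x : ↥I, g ↑x = f x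

/-- A (left) `R`-module `M` is min-projective if every short exact sequence
`0 → N → X → M → 0` with `N` mininjective splits (equivalently `Ext¹(M, N) = 0` for
every mininjective `N`). -/
def IsMinProjectiveLeft (M : Type v) [AddCommGroup M] [Module R M] : Prop :=
  ∀ (X : Type (max u v)) [AddCommGroup X] [Module R X] (p : X →ₗ[R] M),
    Function.Surjective p → IsMininjectiveLeft R ↥(LinearMap.ker p) →
      ∃ s : M →ₗ[R] X, p ∘ₗ s = LinearMap.id

/-- `R` is strongly min-coherent if every minimal (left) ideal of `R` is min-projective. -/
def StronglyMinCoherentLeft : Prop :=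
  ∀ I : Submodule R R, IsAtom I → IsMinProjectiveLeft R ↥I

/-- `R` is a quasi V-ring if every simple `R`-module which is not isomorphic to
any ideal of `R` is injective. -/
def QuasiVRingLeft : Prop :=
  ∀ (S : Type v) [AddCommGroup S] [Module R S], IsSimpleModule R S →
    (¬ ∃ I : Submodule R R, Nonempty (S ≃ₗ[R] ↥I)) → Module.Injective R S

/-- `R` is a Kasch ring if every simple `R`-module is isomorphic to an ideal of `R`. -/
def KaschLeft : Prop :=
  ∀ (S : Type v) [AddCommGroup S] [Module R S], IsSimpleModule R S →
    ∃ I : Submodule R R, Nonempty (S ≃ₗ[R] ↥I)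

/-- An `R`-module `M` is almost injective if for every monomorphism `i : A → B` and every
`f : A → M`, either `f` extends to `B`, or there are a nonzero direct summand `D` of `B`
(with projection `π : B → D`) and `h : M → D` with `h ∘ f = π ∘ i`. -/
def IsAlmostInjectiveLeft (M : Type v) [AddCommGroup M] [Module R M] : Prop :=
  ∀ (A B : Type w) [AddCommGroup A] [AddCommGroup B] [Module R A] [Module R B]
    (i : A →ₗ[R] B), Function.Injective i → ∀ f : A →ₗ[R] M,
    (∃ g : B →ₗ[R] M, g ∘ₗ i = f) ∨
    (∃ D : Submodule R B, D ≠ ⊥ ∧ ∃ π : B →ₗ[R] ↥D,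
      π ∘ₗ D.subtype = LinearMap.id ∧ ∃ h : M →ₗ[R] ↥D, h ∘ₗ f = π ∘ₗ i)

/-- `R` is an almost V-ring if every simple `R`-module is almost injective. -/
def AlmostVRingLeft : Prop :=
  ∀ (S : Type v) [AddCommGroup S] [Module R S], IsSimpleModule R S →
    IsAlmostInjectiveLeft.{u, v, w} R S

end LeftDefs

/-- For a commutative ring `R` in which every maximal ideal is finitely
generated, `R` is a quasi V-ring if and only if `R` is a Kasch ring. -/
theorem quasiVRing_iff_kasch (R : Type u) [CommRing R]
    (hN : ∀ I : Ideal R, I.IsMaximal → I.FG) :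
    QuasiVRingLeft.{u, u} R ↔ KaschLeft.{u, u} R := by
  constructor
  · -- Quasi V-ring → Kasch
    intro hQ S _ _ hs
    by_contra hni
    have hInj : Module.Injective R S := hQ S hs hni
    obtain ⟨m, hm, ⟨e⟩⟩ := (isSimpleModule_iff_quot_maximal (R := R) (M := S)).mp hs
    haveI := hm
    -- the maximal ideal m annihilates S
    have hann : ∀ x ∈ m, ∀ s : S, x • s = 0 := by
      intro x hx s
      apply e.injective
      obtain ⟨r, hr⟩ := Submodule.Quotient.mk_surjective m (e s)
      have : e (x • s) = x • e s := e.map_smul x s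
      rw [this, ← hr, map_zero]
      show x • Submodule.Quotient.mk r = (0 : R ⧸ m)
      rw [← Submodule.Quotient.mk_smul, Submodule.Quotient.mk_eq_zero]
      simpa [smul_eq_mul] using Ideal.mul_mem_right r m hx
    -- m • ⊤ = ⊤ inside m (i.e. m = m²), using injectivity of S
    have hsq : (m • ⊤ : Submodule R ↥m) = ⊤ := by
      by_contra hne
      haveI : Nontrivial (↥m ⧸ (m • ⊤ : Submodule R ↥m)) :=
        Submodule.Quotient.nontrivial_iff.mpr hne
      haveI : IsScalarTower R (R ⧸ m) (↥m ⧸ (m • ⊤ : Submodule R ↥m)) :=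
        (Module.isTorsionBySet_quotient_ideal_smul (↥m) m).isScalarTower
      -- a nonzero functional on the vector space m/m²
      letI : Field (R ⧸ m) := Ideal.Quotient.field m
      let b := Module.Basis.ofVectorSpace (R ⧸ m) (↥m ⧸ (m • ⊤ : Submodule R ↥m))
      obtain ⟨i⟩ := b.index_nonempty
      let φ := b.coord i
      let ψ := φ.restrictScalars R
      let f : ↥m →ₗ[R] S :=
        e.symm.toLinearMap ∘ₗ ψ ∘ₗ (m • ⊤ : Submodule R ↥m).mkQ
      obtain ⟨g, hg⟩ := hInj.out m.subtype m.injective_subtype f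
      have hzero : ∀ x : ↥m, f x = 0 := by
        intro x
        have h1 : g ((x : R)) = (x : R) • g 1 := by
          conv_lhs => rw [show (x : R) = (x : R) • (1 : R) by simp]
          exact g.map_smul _ _
        rw [← hg x]
        show g (m.subtype x) = 0
        rw [Submodule.subtype_apply, h1, hann _ x.2]
      obtain ⟨x, hx⟩ := Submodule.Quotient.mk_surjective (m • ⊤ : Submodule R ↥m) (b i)
      have hfx : f x = e.symm 1 := by
        show e.symm (ψ ((m • ⊤ : Submodule R ↥m).mkQ x)) = e.symm 1
        congr 1
        show φ (Submodule.Quotient.mk x) = 1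
        rw [show Submodule.Quotient.mk x = b i from hx]
        simp [φ, Module.Basis.coord_apply]
      have : (e.symm 1 : S) ≠ 0 := by
        simp only [ne_eq, LinearEquiv.map_eq_zero_iff]
        exact one_ne_zero
      exact this (hfx ▸ hzero x)
    -- hence m = m • m
    have hle : m ≤ m • m := by
      have h1 : Submodule.map m.subtype ⊤ = m := Submodule.map_subtype_top m
      have h2 : Submodule.map m.subtype (m • (⊤ : Submodule R ↥m)) =
          m • Submodule.map m.subtype ⊤ := Submodule.map_smul'' m ⊤ m.subtype
      refine le_of_eq ?_
      calc m = Submodule.map m.subtype ⊤ := h1.symm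
        _ = Submodule.map m.subtype (m • ⊤) := by rw [hsq]
        _ = m • Submodule.map m.subtype ⊤ := h2
        _ = m • m := by rw [h1]
    -- Nakayama: m is generated by an idempotent, so R/m embeds in R
    obtain ⟨r, hr1, hr0⟩ :=
      Submodule.exists_sub_one_mem_and_smul_eq_zero_of_fg_of_le_smul m m (hN m hm) hle
    let μ : R →ₗ[R] R := LinearMap.toSpanSingleton R R r
    have hker : m = LinearMap.ker μ := by
      ext x
      constructor
      · intro hx
        show x • r = 0
        rw [smul_eq_mul, mul_comm, ← smul_eq_mul]
        exact hr0 x hx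
      · intro hx
        have hxr : x * r = 0 := by
          simpa [μ, LinearMap.toSpanSingleton_apply, smul_eq_mul] using hx
        have hmem : x * (r - 1) ∈ m := Ideal.mul_mem_left m x hr1
        have hxx : x = -(x * (r - 1)) := by
          rw [mul_sub, mul_one, neg_sub, hxr, sub_zero]
        rw [hxx]
        exact neg_mem hmem
    refine hni ⟨LinearMap.range μ, ⟨e ≪≫ₗ Submodule.quotEquivOfEq m (LinearMap.ker μ) hker
      ≪≫ₗ μ.quotKerEquivRange⟩⟩
  · -- Kasch → Quasi V-ring (vacuously)
    intro hK S _ _ hs hni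
    exact (hni (hK S hs)).elim
end

section
/- Let R be a ring. Then R is a right GV-ring if and only if R is a right quasi V-ring and the socle of R as a right R-module (the sum of all minimal right ideals of R) is a projective right R-module. -/
universe u v w v'

open MulOpposite

section RightDefs
variable (R : Type u) [Ring R]

/-- A right `R`-module (i.e. an `Rᵐᵒᵖ`-module) `M` is mininjective if every homomorphism
from a minimal right ideal `I` of `R` into `M` extends to a homomorphism `R → M`. -/
def IsMininjective (M : Type v) [AddCommGroup M] [Module Rᵐᵒᵖ M] : Prop :=
  ∀ I : Submodule Rᵐᵒᵖ R, IsAtom I → ∀ f : ↥I →ₗ[Rᵐᵒᵖ] M,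
    ∃ g : R →ₗ[Rᵐᵒᵖ] M, ∀ x : ↥I, g ↑x = f x

/-- A right `R`-module `M` is min-projective if every short exact sequence
`0 → N → X → M → 0` with `N` mininjective splits (equivalently `Ext¹(M, N) = 0`
for every mininjective `N`). -/
def IsMinProjective (M : Type v) [AddCommGroup M] [Module Rᵐᵒᵖ M] : Prop :=
  ∀ (X : Type (max u v)) [AddCommGroup X] [Module Rᵐᵒᵖ X] (p : X →ₗ[Rᵐᵒᵖ] M),
    Function.Surjective p → IsMininjective R ↥(LinearMap.ker p) →
      ∃ s : M →ₗ[Rᵐᵒᵖ] X, p ∘ₗ s = LinearMap.id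

/-- `R` is right strongly min-coherent if every minimal right ideal of `R` is min-projective. -/
def RightStronglyMinCoherent : Prop :=
  ∀ I : Submodule Rᵐᵒᵖ R, IsAtom I → IsMinProjective R ↥I

/-- `R` is a right quasi V-ring if every simple right `R`-module which is not isomorphic to
any right ideal of `R` is injective. -/
def RightQuasiVRing : Prop :=
  ∀ (S : Type v) [AddCommGroup S] [Module Rᵐᵒᵖ S], IsSimpleModule Rᵐᵒᵖ S →
    (¬ ∃ I : Submodule Rᵐᵒᵖ R, Nonempty (S ≃ₗ[Rᵐᵒᵖ] ↥I)) → Module.Injective Rᵐᵒᵖ S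

/-- `R` is a right GV-ring if every simple right `R`-module is injective or projective. -/
def RightGVRing : Prop :=
  ∀ (S : Type v) [AddCommGroup S] [Module Rᵐᵒᵖ S], IsSimpleModule Rᵐᵒᵖ S →
    Module.Injective Rᵐᵒᵖ S ∨ Module.Projective Rᵐᵒᵖ S

/-- `R` is right Kasch if every simple right `R`-module is isomorphic to a right ideal of `R`. -/
def RightKasch : Prop :=
  ∀ (S : Type v) [AddCommGroup S] [Module Rᵐᵒᵖ S], IsSimpleModule Rᵐᵒᵖ S →
    ∃ I : Submodule Rᵐᵒᵖ R, Nonempty (S ≃ₗ[Rᵐᵒᵖ] ↥I)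

/-- A right `R`-module `M` is almost injective if for every monomorphism `i : A → B` and
every `f : A → M`, either `f` extends to `B`, or there are a nonzero direct summand `D` of
`B` (with projection `π : B → D`) and `h : M → D` with `h ∘ f = π ∘ i`. -/
def IsAlmostInjective (M : Type v) [AddCommGroup M] [Module Rᵐᵒᵖ M] : Prop :=
  ∀ (A B : Type w) [AddCommGroup A] [AddCommGroup B] [Module Rᵐᵒᵖ A] [Module Rᵐᵒᵖ B]
    (i : A →ₗ[Rᵐᵒᵖ] B), Function.Injective i → ∀ f : A →ₗ[Rᵐᵒᵖ] M,
    (∃ g : B →ₗ[Rᵐᵒᵖ] M, g ∘ₗ i = f) ∨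
    (∃ D : Submodule Rᵐᵒᵖ B, D ≠ ⊥ ∧ ∃ π : B →ₗ[Rᵐᵒᵖ] ↥D,
      π ∘ₗ D.subtype = LinearMap.id ∧ ∃ h : M →ₗ[Rᵐᵒᵖ] ↥D, h ∘ₗ f = π ∘ₗ i)

/-- `R` is a right almost V-ring if every simple right `R`-module is almost injective. -/
def RightAlmostVRing : Prop :=
  ∀ (S : Type v) [AddCommGroup S] [Module Rᵐᵒᵖ S], IsSimpleModule Rᵐᵒᵖ S →
    IsAlmostInjective.{u, v, w} R S

/-- `R` is right serial if `R`, as a right `R`-module, is an internal direct sum of finitely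
many uniserial submodules. -/
def RightSerial : Prop :=
  ∃ (n : ℕ) (c : Fin n → Submodule Rᵐᵒᵖ R), DirectSum.IsInternal c ∧
    ∀ i, ∀ N P : Submodule Rᵐᵒᵖ ↥(c i), N ≤ P ∨ P ≤ N

/-- `R` is left serial if `R`, as a left `R`-module, is an internal direct sum of finitely
many uniserial submodules. -/
def LeftSerial : Prop :=
  ∃ (n : ℕ) (c : Fin n → Submodule R R), DirectSum.IsInternal c ∧
    ∀ i, ∀ N P : Submodule R ↥(c i), N ≤ P ∨ P ≤ N

/-- The square of the Jacobson radical of `R` is zero. -/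
def JacobsonSquareZero : Prop :=
  ∀ x ∈ (⊥ : TwoSidedIdeal R).jacobson, ∀ y ∈ (⊥ : TwoSidedIdeal R).jacobson, x * y = 0

end RightDefs


section Aux

variable {R : Type u} [Ring R]

/-- `Rᵐᵒᵖ ≃ₗ[Rᵐᵒᵖ] R` via `unop`. -/
def opSelfEquiv (R : Type u) [Ring R] : Rᵐᵒᵖ ≃ₗ[Rᵐᵒᵖ] R :=
  { MulOpposite.opAddEquiv.symm with
    map_smul' := fun a b => by
      show MulOpposite.unop (a * b) = a • MulOpposite.unop b
      rw [MulOpposite.unop_mul, MulOpposite.smul_eq_mul_unop] }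

theorem projective_self_op (R : Type u) [Ring R] : Module.Projective Rᵐᵒᵖ R :=
  Module.Projective.of_equiv (opSelfEquiv R)

/-- An injective right ideal is a direct summand, hence projective. -/
theorem projective_of_injective_ideal {I : Submodule Rᵐᵒᵖ R}
    (hI : Module.Injective Rᵐᵒᵖ ↥I) : Module.Projective Rᵐᵒᵖ ↥I := by
  have := projective_self_op R
  obtain ⟨g, hg⟩ := hI.out I.subtype I.injective_subtype LinearMap.id
  exact Module.Projective.of_split I.subtype g (by ext x; exact congrArg Subtype.val (hg x))

/-- A projective simple right module is isomorphic to a right ideal. -/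
theorem exists_ideal_iso_of_projective_simple (S : Type u) [AddCommGroup S] [Module Rᵐᵒᵖ S]
    (hS : IsSimpleModule Rᵐᵒᵖ S) (hP : Module.Projective Rᵐᵒᵖ S) :
    ∃ I : Submodule Rᵐᵒᵖ R, Nonempty (S ≃ₗ[Rᵐᵒᵖ] ↥I) := by
  have := hS.nontrivial
  obtain ⟨x, hx⟩ := exists_ne (0 : S)
  set p : R →ₗ[Rᵐᵒᵖ] S :=
    (LinearMap.toSpanSingleton Rᵐᵒᵖ S x) ∘ₗ (opSelfEquiv R).symm.toLinearMap with hp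
  have hsurj : Function.Surjective p :=
    (IsSimpleModule.toSpanSingleton_surjective Rᵐᵒᵖ hx).comp (opSelfEquiv R).symm.surjective
  obtain ⟨s, hs⟩ := Module.projective_lifting_property p LinearMap.id hsurj
  have hinj : Function.Injective s := by
    intro a b hab
    have := congrArg p hab
    have ha : p (s a) = a := LinearMap.congr_fun hs a
    have hb : p (s b) = b := LinearMap.congr_fun hs b
    rw [ha, hb] at this; exact this
  exact ⟨LinearMap.range s, ⟨LinearEquiv.ofInjective s hinj⟩⟩

/-- The socle is a semisimple module. -/
theorem socle_isSemisimple (R : Type u) [Ring R] :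
    IsSemisimpleModule Rᵐᵒᵖ ↥(sSup {I : Submodule Rᵐᵒᵖ R | IsAtom I}) := by
  rw [sSup_eq_iSup]
  exact isSemisimpleModule_biSup_of_isSemisimpleModule_submodule
    (fun I hI => by
      have : IsSimpleModule Rᵐᵒᵖ ↥I := (isSimpleModule_iff_isAtom).2 hI
      infer_instance)

end Aux

set_option synthInstance.maxHeartbeats 1000000
set_option maxHeartbeats 1000000

/-- `R` is a right GV-ring iff `R` is a right quasi V-ring and the right
socle of `R` (the sum of all minimal right ideals) is a projective right `R`-module. -/
theorem rightGVRing_iff_rightQuasiVRing_and_socle_projective (R : Type u) [Ring R] :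
    RightGVRing.{u, u} R ↔
      (RightQuasiVRing.{u, u} R ∧
        Module.Projective Rᵐᵒᵖ ↥(sSup {I : Submodule Rᵐᵒᵖ R | IsAtom I})) := by
  classical
  constructor
  · intro hGV
    have hatom_proj : ∀ I : Submodule Rᵐᵒᵖ R, IsAtom I → Module.Projective Rᵐᵒᵖ ↥I := by
      intro I hI
      have hsimple : IsSimpleModule Rᵐᵒᵖ ↥I := (isSimpleModule_iff_isAtom).2 hI
      rcases hGV ↥I hsimple with h | h
      · exact projective_of_injective_ideal h
      · exact h
    constructor
    · intro S _ _ hS hniso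
      rcases hGV S hS with h | h
      · exact h
      · exact absurd (exists_ideal_iso_of_projective_simple S hS h) hniso
    · -- socle is projective
      set soc := sSup {I : Submodule Rᵐᵒᵖ R | IsAtom I} with hsoc
      have hss : IsSemisimpleModule Rᵐᵒᵖ ↥soc := socle_isSemisimple R
      obtain ⟨s, hind, hstop, hsimp⟩ :=
        IsSemisimpleModule.exists_sSupIndep_sSup_simples_eq_top Rᵐᵒᵖ ↥soc
      let c : s → Submodule Rᵐᵒᵖ ↥soc := Subtype.val
      have hiInd : iSupIndep c := (sSupIndep_iff s).mp hind
      have hiSup : ⨆ i, c i = ⊤ := by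
        rw [show (⨆ i, c i) = sSup s from (sSup_eq_iSup' s).symm]; exact hstop
      have hInternal : DirectSum.IsInternal c :=
        (DirectSum.isInternal_submodule_iff_iSupIndep_and_iSup_eq_top c).mpr ⟨hiInd, hiSup⟩
      have hproj : ∀ i, Module.Projective Rᵐᵒᵖ ↥(c i) := by
        intro i
        haveI hsimp_i : IsSimpleModule Rᵐᵒᵖ ↥(c i) := hsimp i i.2
        have e : ↥(c i) ≃ₗ[Rᵐᵒᵖ] ↥((c i).map soc.subtype) :=
          Submodule.equivMapOfInjective soc.subtype soc.injective_subtype (c i)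
        haveI hTsimple : IsSimpleModule Rᵐᵒᵖ ↥((c i).map soc.subtype) :=
          IsSimpleModule.congr (N := ↥(c i)) e.symm
        have hTatom : IsAtom ((c i).map soc.subtype) :=
          (isSimpleModule_iff_isAtom).1 hTsimple
        haveI := hatom_proj _ hTatom
        exact Module.Projective.of_equiv e.symm
      haveI : ∀ i, Module.Projective Rᵐᵒᵖ ↥(c i) := hproj
      haveI : Module.Projective Rᵐᵒᵖ (DirectSum s (fun i => ↥(c i))) :=
        inferInstanceAs (Module.Projective Rᵐᵒᵖ (Π₀ i, ↥(c i)))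
      exact Module.Projective.of_equiv
        (LinearEquiv.ofBijective (DirectSum.coeLinearMap c) hInternal)
  · rintro ⟨hQV, hsocProj⟩
    intro S _ _ hS
    by_cases hiso : ∃ I : Submodule Rᵐᵒᵖ R, Nonempty (S ≃ₗ[Rᵐᵒᵖ] ↥I)
    · right
      obtain ⟨I, ⟨e⟩⟩ := hiso
      have hIsimple : IsSimpleModule Rᵐᵒᵖ ↥I := IsSimpleModule.congr (N := S) e.symm
      have hIatom : IsAtom I := (isSimpleModule_iff_isAtom).1 hIsimple
      set soc := sSup {I : Submodule Rᵐᵒᵖ R | IsAtom I} with hsoc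
      have hle : I ≤ soc := le_sSup hIatom
      have hss : IsSemisimpleModule Rᵐᵒᵖ ↥soc := socle_isSemisimple R
      set I' : Submodule Rᵐᵒᵖ ↥soc := I.comap soc.subtype with hI'
      obtain ⟨q, hq⟩ := exists_isCompl I'
      have hprojI' : Module.Projective Rᵐᵒᵖ ↥I' :=
        Module.Projective.of_split I'.subtype (Submodule.projectionOnto I' q hq)
          (by ext x; simp)
      have e2 : ↥I' ≃ₗ[Rᵐᵒᵖ] ↥I := Submodule.comapSubtypeEquivOfLe hle
      exact Module.Projective.of_equiv (e2.trans e.symm)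
    · left
      exact hQV S hS hiso
end

section
/- Let R be a ring such that every mininjective right R-module is injective. Then R is right Artinian, R is right strongly min-coherent, and R is a right quasi V-ring. -/
universe u v w v'

open MulOpposite

section Aux
open MulOpposite DirectSum
variable {R : Type u} [Ring R]

/-- A surjection with injective kernel splits. -/
lemma aux_split_of_injective_ker {X M : Type u} [AddCommGroup X] [Module Rᵐᵒᵖ X]
    [AddCommGroup M] [Module Rᵐᵒᵖ M] (p : X →ₗ[Rᵐᵒᵖ] M) (hp : Function.Surjective p)
    (hK : Module.Injective Rᵐᵒᵖ ↥(LinearMap.ker p)) :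
    ∃ s : M →ₗ[Rᵐᵒᵖ] X, p ∘ₗ s = LinearMap.id := by
  set K := LinearMap.ker p with hKdef
  obtain ⟨r, hr⟩ := hK.out K.subtype (Submodule.injective_subtype K) LinearMap.id
  set q : X →ₗ[Rᵐᵒᵖ] X := LinearMap.id - K.subtype ∘ₗ r with hq
  have hle : K ≤ LinearMap.ker q := by
    intro x hx
    have : r x = ⟨x, hx⟩ := hr ⟨x, hx⟩
    simp [hq, LinearMap.mem_ker, this]
  have hpq : ∀ x, p (q x) = p x := by
    intro x
    have hmem : ((r x : K) : X) ∈ K := (r x).2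
    have : p ((r x : K) : X) = 0 := hmem
    simp [hq, this]
  let e := p.quotKerEquivOfSurjective hp
  refine ⟨(K.liftQ q hle) ∘ₗ (e.symm : M →ₗ[Rᵐᵒᵖ] (X ⧸ K)), ?_⟩
  ext y
  obtain ⟨x, rfl⟩ := hp y
  have he : e (Submodule.Quotient.mk x) = p x := by
    simp [e, LinearMap.quotKerEquivOfSurjective]
  have he' : e.symm (p x) = Submodule.Quotient.mk x := by
    rw [LinearEquiv.symm_apply_eq, he]
  simp only [LinearMap.comp_apply, LinearMap.id_apply, LinearEquiv.coe_coe, he']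
  rw [Submodule.liftQ_apply, hpq]

lemma aux_exists_simple_submodule {R : Type u} [Ring R]
    (h : ∀ (M : Type u) [AddCommGroup M] [Module Rᵐᵒᵖ M],
        IsMininjective R M → Module.Injective Rᵐᵒᵖ M)
    (M : Type u) [AddCommGroup M] [Module Rᵐᵒᵖ M] [Nontrivial M] :
    ∃ S : Submodule Rᵐᵒᵖ M, IsSimpleModule Rᵐᵒᵖ ↥S := by
  by_contra hno
  push_neg at hno
  have hinj : ∀ N : Submodule Rᵐᵒᵖ M, Module.Injective Rᵐᵒᵖ ↥N := by
    intro N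
    apply h
    intro I hI f
    have hf0 : f = 0 := by
      by_contra hf
      haveI : IsSimpleModule Rᵐᵒᵖ ↥I := isSimpleModule_iff_isAtom.2 hI
      have hker : LinearMap.ker f = ⊥ := by
        rcases eq_bot_or_eq_top (LinearMap.ker f) with h' | h'
        · exact h'
        · exact absurd (LinearMap.ker_eq_top.mp h') hf
      have einj : Function.Injective f := LinearMap.ker_eq_bot.mp hker
      have e1 : ↥I ≃ₗ[Rᵐᵒᵖ] ↥(LinearMap.range f) := LinearEquiv.ofInjective f einj
      haveI : IsSimpleModule Rᵐᵒᵖ ↥(LinearMap.range f) := IsSimpleModule.congr e1.symm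
      have e2 : ↥(LinearMap.range f) ≃ₗ[Rᵐᵒᵖ]
          ↥((LinearMap.range f).map N.subtype) :=
        Submodule.equivMapOfInjective _ (Submodule.injective_subtype N) _
      have hfin : IsSimpleModule Rᵐᵒᵖ ↥((LinearMap.range f).map N.subtype) :=
        IsSimpleModule.congr (N := ↥(LinearMap.range f)) e2.symm
      exact hno _ hfin
    exact ⟨0, by simp [hf0]⟩
  haveI : IsSemisimpleModule Rᵐᵒᵖ M := by
    refine (isSemisimpleModule_iff _ _).2 ⟨?_⟩
    intro N
    obtain ⟨r, hr⟩ := (hinj N).out N.subtype (Submodule.injective_subtype N) LinearMap.id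
    refine ⟨LinearMap.ker r, ?_, ?_⟩
    · rw [disjoint_iff]
      ext x
      simp only [Submodule.mem_inf, Submodule.mem_bot, LinearMap.mem_ker]
      constructor
      · rintro ⟨hxN, hxr⟩
        have : r x = ⟨x, hxN⟩ := hr ⟨x, hxN⟩
        rw [this] at hxr
        simpa using congrArg (Subtype.val) hxr
      · rintro rfl; simp
    · rw [codisjoint_iff]
      rw [eq_top_iff]
      intro m _
      have h1 : ((r m : N) : M) ∈ N := (r m).2
      have h2 : m - ((r m : N) : M) ∈ LinearMap.ker r := by
        rw [LinearMap.mem_ker, map_sub]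
        have : r ((r m : N) : M) = r m := hr (r m)
        rw [this, sub_self]
      have : m = ((r m : N) : M) + (m - ((r m : N) : M)) := by abel
      rw [this]
      exact Submodule.add_mem_sup h1 h2
  obtain ⟨S, hS⟩ := IsSemisimpleModule.exists_simple_submodule Rᵐᵒᵖ M
  exact hno S hS

lemma aux_mininjective_directSum {R : Type u} [Ring R] (E : ℕ → Type u)
    [∀ n, AddCommGroup (E n)] [∀ n, Module Rᵐᵒᵖ (E n)]
    (hE : ∀ n, Module.Injective Rᵐᵒᵖ (E n)) : IsMininjective R (⨁ n, E n) := by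
  classical
  intro I hI f
  obtain ⟨a, haI, ha0⟩ := (Submodule.ne_bot_iff I).mp hI.1
  have hspan : Submodule.span Rᵐᵒᵖ ({a} : Set R) = I := by
    have hle : Submodule.span Rᵐᵒᵖ ({a} : Set R) ≤ I :=
      Submodule.span_le.2 (Set.singleton_subset_iff.2 haI)
    rcases hle.lt_or_eq with hlt | heq
    · have hbot := hI.2 _ hlt
      have : a ∈ (⊥ : Submodule Rᵐᵒᵖ R) := hbot ▸ Submodule.mem_span_singleton_self a
      exact absurd (by simpa using this) ha0
    · exact heq
  set a₀ : ↥I := ⟨a, haI⟩ with ha₀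
  set T : Finset ℕ := (f a₀).support with hT
  choose g hg using fun n =>
    (hE n).out I.subtype (Submodule.injective_subtype I)
      ((DirectSum.component Rᵐᵒᵖ ℕ E n) ∘ₗ f)
  refine ⟨∑ n ∈ T, (DirectSum.lof Rᵐᵒᵖ ℕ E n) ∘ₗ g n, ?_⟩
  intro x
  have hx : (x : R) ∈ Submodule.span Rᵐᵒᵖ ({a} : Set R) := hspan ▸ x.2
  obtain ⟨r, hr⟩ := Submodule.mem_span_singleton.mp hx
  have hxx : (x : ↥I) = r • a₀ := Subtype.ext (by simp [ha₀, hr])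
  have hsupp : (f x).support ⊆ T := by
    rw [hxx, map_smul]
    exact DFinsupp.support_smul r (f a₀)
  have key : f x = ∑ n ∈ T, DirectSum.of E n ((f x) n) := by
    have h1 := DirectSum.sum_support_of (f x)
    have h2 : ∑ i ∈ (f x).support, DirectSum.of E i ((f x) i)
        = ∑ n ∈ T, DirectSum.of E n ((f x) n) :=
      Finset.sum_subset hsupp (fun n _ hn => by
        have hz : (f x) n = 0 := DFinsupp.notMem_support_iff.mp hn
        simp [hz])
    exact h1.symm.trans h2
  have hterm : ∀ n, (DirectSum.lof Rᵐᵒᵖ ℕ E n ∘ₗ g n) ((x : R))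
      = DirectSum.of E n ((f x) n) := by
    intro n
    have h3 := hg n x
    simp only [LinearMap.comp_apply] at h3
    simp only [LinearMap.comp_apply, DirectSum.lof_eq_of]
    congr 1
  rw [LinearMap.sum_apply, Finset.sum_congr rfl (fun n _ => hterm n)]
  exact key.symm

lemma aux_isNoetherian {R : Type u} [Ring R]
    (h : ∀ (M : Type u) [AddCommGroup M] [Module Rᵐᵒᵖ M],
        IsMininjective R M → Module.Injective Rᵐᵒᵖ M) :
    IsNoetherian Rᵐᵒᵖ R := by
  classical
  rw [← monotone_stabilizes_iff_noetherian]
  intro c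
  -- embed each quotient `R ⧸ c n` into an injective module `E n`
  set J : ℕ → ModuleCat.{u} Rᵐᵒᵖ :=
    fun n => CategoryTheory.Injective.under (ModuleCat.of Rᵐᵒᵖ (R ⧸ c n)) with hJ
  set E : ℕ → Type u := fun n => (J n : Type u) with hEdef
  have hEinj : ∀ n, Module.Injective Rᵐᵒᵖ (E n) := fun n =>
    Module.injective_module_of_injective_object _ _
      (inj := CategoryTheory.Injective.injective_under _)
  let ι : ∀ n, (R ⧸ c n) →ₗ[Rᵐᵒᵖ] E n := fun n =>
    (CategoryTheory.Injective.ι (ModuleCat.of Rᵐᵒᵖ (R ⧸ c n))).hom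
  have hιinj : ∀ n, Function.Injective (ι n) := fun n =>
    (ModuleCat.mono_iff_injective _).mp (CategoryTheory.Injective.ι_mono (ModuleCat.of Rᵐᵒᵖ (R ⧸ c n)))
  let φ : ∀ n, R →ₗ[Rᵐᵒᵖ] E n := fun n => (ι n) ∘ₗ (c n).mkQ
  have hφ : ∀ n x, φ n x = 0 ↔ x ∈ c n := by
    intro n x
    constructor
    · intro hx
      have : (c n).mkQ x = 0 := by
        apply hιinj n
        simpa [φ] using hx
      rw [Submodule.mkQ_apply, Submodule.Quotient.mk_eq_zero] at this
      exact this
    · intro hx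
      have : (c n).mkQ x = 0 := (Submodule.Quotient.mk_eq_zero _).2 hx
      simp [φ, LinearMap.comp_apply, this]
  -- the direct sum of the `E n` is injective
  have hDSinj : Module.Injective Rᵐᵒᵖ (⨁ n, E n) :=
    h _ (aux_mininjective_directSum E hEinj)
  set I : Submodule Rᵐᵒᵖ R := ⨆ n, c n with hIdef
  have hmem : ∀ x : ↥I, ∃ n, (x : R) ∈ c n := fun x =>
    (Submodule.mem_iSup_of_chain c _).mp x.2
  -- partial sums
  set SN : R → ℕ → ⨁ n, E n :=
    fun x N => ∑ k ∈ Finset.range N, DirectSum.lof Rᵐᵒᵖ ℕ E k (φ k x) with hSN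
  have hS : ∀ (x : R) (N M' : ℕ), x ∈ c N → N ≤ M' → SN x M' = SN x N := by
    intro x N M' hxN hNM
    refine (Finset.sum_subset (Finset.range_subset_range.2 hNM) ?_).symm
    intro k _ hk
    have hNk : N ≤ k := le_of_not_gt (fun hlt => hk (Finset.mem_range.2 hlt))
    have : x ∈ c k := c.monotone hNk hxN
    have : φ k x = 0 := (hφ k x).2 this
    simp [this]
  have hF0 : ∀ x : ↥I, ∀ N, (x : R) ∈ c N → SN (x : R) (Nat.find (hmem x)) = SN (x : R) N := by
    intro x N hN
    have h1 := Nat.find_spec (hmem x)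
    have e1 := hS (x : R) _ (max (Nat.find (hmem x)) N) h1 (le_max_left _ _)
    have e2 := hS (x : R) _ (max (Nat.find (hmem x)) N) hN (le_max_right _ _)
    rw [← e1, e2]
  let F : ↥I →ₗ[Rᵐᵒᵖ] ⨁ n, E n :=
    { toFun := fun x => SN (x : R) (Nat.find (hmem x))
      map_add' := by
        intro x y
        obtain ⟨N₁, h1⟩ := hmem x
        obtain ⟨N₂, h2⟩ := hmem y
        set N := max N₁ N₂ with hN
        have hx : (x : R) ∈ c N := c.monotone (le_max_left _ _) h1
        have hy : (y : R) ∈ c N := c.monotone (le_max_right _ _) h2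
        have hxy : ((x + y : ↥I) : R) ∈ c N := by
          rw [Submodule.coe_add]; exact (c N).add_mem hx hy
        show SN (↑(x + y)) (Nat.find (hmem (x + y))) =
          SN (↑x) (Nat.find (hmem x)) + SN (↑y) (Nat.find (hmem y))
        rw [hF0 (x + y) N hxy, hF0 x N hx, hF0 y N hy]
        simp [hSN, Submodule.coe_add, map_add, Finset.sum_add_distrib]
      map_smul' := by
        intro r x
        obtain ⟨N, hN⟩ := hmem x
        have hrx : ((r • x : ↥I) : R) ∈ c N := by
          rw [Submodule.coe_smul]; exact (c N).smul_mem r hN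
        show SN (↑(r • x)) (Nat.find (hmem (r • x))) = r • SN (↑x) (Nat.find (hmem x))
        rw [hF0 (r • x) N hrx, hF0 x N hN]
        rw [hSN]
        simp only []
        rw [Finset.smul_sum]
        refine Finset.sum_congr rfl fun k _ => ?_
        rw [Submodule.coe_smul, map_smul, map_smul] }
  have hFspec : ∀ (x : ↥I) (N : ℕ), (x : R) ∈ c N → F x = SN (x : R) N :=
    fun x N hN => hF0 x N hN
  obtain ⟨g, hg⟩ := hDSinj.out I.subtype (Submodule.injective_subtype I) F
  set s : ⨁ n, E n := g 1 with hs
  set B : ℕ := s.support.sup id + 1 with hB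
  have hBz : ∀ m, B ≤ m → s m = 0 := by
    intro m hm
    by_contra hzm
    have h1 : m ∈ s.support := DFinsupp.mem_support_iff.2 hzm
    have h2 := Finset.le_sup (f := id) h1
    simp only [id] at h2
    omega
  have hIle : ∀ m, B ≤ m → I ≤ c m := by
    intro m hm x hx
    set xi : ↥I := ⟨x, hx⟩ with hxi
    have h1 : g x = F xi := hg xi
    have h2 : g x = op x • s := by
      have hx1 : x = op x • (1 : R) := by
        rw [op_smul_eq_mul, one_mul]
      rw [hs]
      conv_lhs => rw [hx1]
      exact map_smul g (op x) 1
    have h4 : (F xi) m = 0 := by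
      rw [← h1, h2, DFinsupp.smul_apply, hBz m hm, smul_zero]
    obtain ⟨N, hN⟩ := hmem xi
    rcases lt_or_ge m N with hmN | hNm
    · -- compute the m-th component
      have h5 : (F xi) m = φ m x := by
        rw [hFspec xi N hN, hSN]
        have h6 : (∑ k ∈ Finset.range N, DirectSum.lof Rᵐᵒᵖ ℕ E k (φ k x)) m
            = ∑ k ∈ Finset.range N, (DirectSum.lof Rᵐᵒᵖ ℕ E k (φ k x)) m :=
          map_sum (DirectSum.component Rᵐᵒᵖ ℕ E m) _ _
        rw [h6]
        rw [Finset.sum_eq_single_of_mem m (Finset.mem_range.2 hmN)]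
        · rw [DirectSum.lof_eq_of, DirectSum.of_eq_same]
        · intro k _ hkm
          rw [DirectSum.lof_eq_of, DirectSum.of_eq_of_ne _ _ _ hkm.symm]
      rw [h5] at h4
      exact (hφ m x).1 h4
    · exact c.monotone hNm hN
  refine ⟨B, fun m hm => ?_⟩
  have h1 : c B ≤ c m := c.monotone hm
  have h2 : c m ≤ c B := le_trans (le_iSup (fun k => c k) m) (hIle B le_rfl)
  exact le_antisymm h1 h2

lemma aux_artinian_of_simple {R : Type u} [Ring R] {M : Type u} [AddCommGroup M]
    [Module Rᵐᵒᵖ M] (hs : IsSimpleModule Rᵐᵒᵖ M) : IsArtinian Rᵐᵒᵖ M := by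
  have hfin : Finite (Submodule Rᵐᵒᵖ M) := by
    refine Finite.of_surjective
      (fun b : Bool => if b then (⊤ : Submodule Rᵐᵒᵖ M) else ⊥) (fun N => ?_)
    rcases hs.eq_bot_or_eq_top N with hb | ht
    · exact ⟨false, by simp [hb]⟩
    · exact ⟨true, by simp [ht]⟩
  exact inferInstance

lemma aux_isArtinian {R : Type u} [Ring R]
    (h : ∀ (M : Type u) [AddCommGroup M] [Module Rᵐᵒᵖ M],
        IsMininjective R M → Module.Injective Rᵐᵒᵖ M) :
    IsArtinian Rᵐᵒᵖ R := by
  have hnoe : IsNoetherian Rᵐᵒᵖ R := aux_isNoetherian h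
  obtain ⟨N, hNA, hNmax⟩ := set_has_maximal_iff_noetherian.mpr hnoe
    {P : Submodule Rᵐᵒᵖ R | IsArtinian Rᵐᵒᵖ ↥P}
    ⟨⊥, by
      have : Subsingleton ↥(⊥ : Submodule Rᵐᵒᵖ R) := inferInstance
      exact isArtinian_of_finite⟩
  haveI : IsArtinian Rᵐᵒᵖ ↥N := hNA
  by_cases hN : N = ⊤
  · subst hN
    exact isArtinian_of_linearEquiv (Submodule.topEquiv)
  · exfalso
    have hlt : N < ⊤ := lt_top_iff_ne_top.2 hN
    haveI : Nontrivial (R ⧸ N) := by rw [Submodule.Quotient.nontrivial_iff]; exact hlt.ne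
    obtain ⟨S, hS⟩ := aux_exists_simple_submodule h (R ⧸ N)
    set N' : Submodule Rᵐᵒᵖ R := S.comap N.mkQ with hN'
    let ψ0 : ↥N' →ₗ[Rᵐᵒᵖ] (R ⧸ N) := N.mkQ ∘ₗ N'.subtype
    have hψmem : ∀ x : ↥N', ψ0 x ∈ S := fun x => x.2
    let ψ : ↥N' →ₗ[Rᵐᵒᵖ] ↥S := ψ0.codRestrict S hψmem
    have hψsurj : Function.Surjective ψ := by
      rintro ⟨t, ht⟩
      obtain ⟨x, hx⟩ := N.mkQ_surjective t
      refine ⟨⟨x, ?_⟩, ?_⟩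
      · show N.mkQ x ∈ S
        rw [hx]; exact ht
      · apply Subtype.ext
        show ψ0 _ = t
        simp only [ψ0, LinearMap.comp_apply]
        exact hx
    have hle : N ≤ N' := by
      intro x hx
      show N.mkQ x ∈ S
      rw [show N.mkQ x = 0 from (Submodule.Quotient.mk_eq_zero _).2 hx]
      exact S.zero_mem
    have hker : LinearMap.ker ψ = Submodule.comap N'.subtype N := by
      ext x
      simp only [LinearMap.mem_ker, Submodule.mem_comap]
      constructor
      · intro hx
        have : ψ0 x = 0 := congrArg Subtype.val hx
        simp only [ψ0, LinearMap.comp_apply] at this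
        rwa [Submodule.mkQ_apply, Submodule.Quotient.mk_eq_zero] at this
      · intro hx
        apply Subtype.ext
        show ψ0 x = 0
        simp only [ψ0, LinearMap.comp_apply]
        rw [Submodule.mkQ_apply, Submodule.Quotient.mk_eq_zero]
        exact hx
    haveI hart1 : IsArtinian Rᵐᵒᵖ ↥(LinearMap.ker ψ) := by
      rw [hker]
      have e : ↥(Submodule.comap N'.subtype N) ≃ₗ[Rᵐᵒᵖ] ↥N :=
        Submodule.comapSubtypeEquivOfLe hle
      exact @isArtinian_of_linearEquiv Rᵐᵒᵖ ↥N ↥(Submodule.comap N'.subtype N)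
        _ _ _ _ _ e.symm ‹IsArtinian Rᵐᵒᵖ ↥N›
    haveI hartS : IsArtinian Rᵐᵒᵖ ↥S := aux_artinian_of_simple hS
    haveI hart2 : IsArtinian Rᵐᵒᵖ (↥N' ⧸ LinearMap.ker ψ) :=
      isArtinian_of_linearEquiv (ψ.quotKerEquivOfSurjective hψsurj).symm
    have hart : IsArtinian Rᵐᵒᵖ ↥N' :=
      (isArtinian_iff_submodule_quotient (LinearMap.ker ψ)).2 ⟨hart1, hart2⟩
    have heq : N = N' := by
      rcases hle.lt_or_eq with hlt' | heq'
      · exact absurd hlt' (hNmax N' hart)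
      · exact heq'
    haveI := hS.nontrivial
    obtain ⟨t, ht0⟩ := exists_ne (0 : ↥S)
    obtain ⟨x, hx⟩ := N.mkQ_surjective (t : R ⧸ N)
    have hxN' : x ∈ N' := by
      show N.mkQ x ∈ S
      rw [hx]; exact t.2
    rw [← heq] at hxN'
    apply ht0
    apply Subtype.ext
    show (t : R ⧸ N) = 0
    rw [← hx, Submodule.mkQ_apply, Submodule.Quotient.mk_eq_zero]
    exact hxN'

end Aux

/-- If every mininjective right `R`-module is injective then `R` is right
Artinian, right strongly min-coherent, and a right quasi V-ring. -/
theorem artinian_stronglyMinCoherent_quasiV_of_mininjective_injective (R : Type u) [Ring R]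
    (h : ∀ (M : Type u) [AddCommGroup M] [Module Rᵐᵒᵖ M],
        IsMininjective R M → Module.Injective Rᵐᵒᵖ M) :
    IsArtinian Rᵐᵒᵖ R ∧ RightStronglyMinCoherent R ∧ RightQuasiVRing.{u, u} R := by
  refine ⟨aux_isArtinian h, ?_, ?_⟩
  · intro I _ X _ _ p hp hmin
    exact aux_split_of_injective_ker p hp (h _ hmin)
  · intro S _ _ hS hniso
    apply h
    intro I hI f
    by_cases hf : f = 0
    · exact ⟨0, fun x => by simp [hf]⟩
    · exfalso
      haveI hsimpI : IsSimpleModule Rᵐᵒᵖ ↥I := isSimpleModule_iff_isAtom.2 hI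
      have hker : LinearMap.ker f = ⊥ := by
        rcases hsimpI.eq_bot_or_eq_top (LinearMap.ker f) with h' | h'
        · exact h'
        · exact absurd (LinearMap.ker_eq_top.mp h') hf
      have hrange : LinearMap.range f = ⊤ := by
        rcases hS.eq_bot_or_eq_top (LinearMap.range f) with h' | h'
        · exact absurd (LinearMap.range_eq_bot.mp h') hf
        · exact h'
      have e : ↥I ≃ₗ[Rᵐᵒᵖ] S := LinearEquiv.ofBijective f
        ⟨LinearMap.ker_eq_bot.mp hker, LinearMap.range_eq_top.mp hrange⟩
      exact hniso ⟨I, ⟨e.symm⟩⟩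
end

section
/- Let R be a ring satisfying: (i) R is right Artinian, right strongly min-coherent and a right quasi V-ring, and (ii) for every simple right R-module S, either S is isomorphic to a submodule of R, or S is isomorphic to a submodule of R/I for some minimal right ideal I of R. Then every mininjective right R-module is injective. -/
universe u v w v'

open MulOpposite

section Helpers
open Submodule LinearMap
variable {R : Type u} [Ring R]

def myOpEquiv (R : Type u) [Ring R] : R ≃ₗ[Rᵐᵒᵖ] Rᵐᵒᵖ where
  toFun := op
  invFun := unop
  map_add' _ _ := rfl
  map_smul' _ _ := rfl
  left_inv _ := rfl
  right_inv _ := rfl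

theorem IsMininjective.congr {M N : Type v} [AddCommGroup M] [Module Rᵐᵒᵖ M]
    [AddCommGroup N] [Module Rᵐᵒᵖ N] (e : M ≃ₗ[Rᵐᵒᵖ] N) (h : IsMininjective R M) :
    IsMininjective R N := by
  intro I hI f
  obtain ⟨g, hg⟩ := h I hI (e.symm.toLinearMap ∘ₗ f)
  refine ⟨e.toLinearMap ∘ₗ g, fun x => ?_⟩
  have := hg x
  simp only [LinearMap.comp_apply] at this ⊢
  rw [this]
  exact e.apply_symm_apply _

theorem split_over_quot (I : Submodule Rᵐᵒᵖ R) (hI : IsAtom I)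
    {Y : Type u} [AddCommGroup Y] [Module Rᵐᵒᵖ Y] (q : Y →ₗ[Rᵐᵒᵖ] (R ⧸ I))
    (hq : Function.Surjective q) (hker : IsMininjective R ↥(LinearMap.ker q)) :
    ∃ σ : (R ⧸ I) →ₗ[Rᵐᵒᵖ] Y, ∀ z, q (σ z) = z := by
  obtain ⟨y₀, hy₀⟩ := hq (I.mkQ 1)
  let h : R →ₗ[Rᵐᵒᵖ] Y := (LinearMap.toSpanSingleton Rᵐᵒᵖ Y y₀) ∘ₗ (myOpEquiv R).toLinearMap
  have happ : ∀ r : R, h r = op r • y₀ := fun r => rfl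
  have hqh : ∀ r, q (h r) = I.mkQ r := by
    intro r
    rw [happ, map_smul, hy₀, ← map_smul]
    congr 1
    rw [op_smul_eq_mul, one_mul]
  have hhI : ∀ x : ↥(I), h ↑x ∈ LinearMap.ker q := by
    intro x
    rw [LinearMap.mem_ker, hqh, Submodule.mkQ_apply, Submodule.Quotient.mk_eq_zero]
    exact x.2
  let h' : ↥I →ₗ[Rᵐᵒᵖ] ↥(LinearMap.ker q) :=
    LinearMap.codRestrict (LinearMap.ker q) (h ∘ₗ I.subtype) (fun x => hhI x)
  obtain ⟨g, hg⟩ := hker I hI h'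
  let h₂ : R →ₗ[Rᵐᵒᵖ] Y := h - (LinearMap.ker q).subtype ∘ₗ g
  have hIle : I ≤ LinearMap.ker h₂ := by
    intro x hx
    rw [LinearMap.mem_ker]
    show h x - ↑(g x) = 0
    rw [hg ⟨x, hx⟩]
    show h x - h ↑(⟨x, hx⟩ : ↥I) = 0
    rw [sub_self]
  refine ⟨Submodule.liftQ I h₂ hIle, fun z => ?_⟩
  obtain ⟨r, rfl⟩ := Submodule.Quotient.mk_surjective I z
  rw [Submodule.liftQ_apply]
  show q (h r - ↑(g r)) = Submodule.Quotient.mk r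
  rw [← Submodule.mkQ_apply]
  rw [map_sub, hqh]
  have : q ↑(g r) = 0 := (g r).2
  rw [this, sub_zero, Submodule.mkQ_apply]

theorem split_of_emb {S X M : Type u}
    [AddCommGroup S] [Module Rᵐᵒᵖ S] [AddCommGroup X] [Module Rᵐᵒᵖ X]
    [AddCommGroup M] [Module Rᵐᵒᵖ M]
    (I : Submodule Rᵐᵒᵖ R) (hI : IsAtom I)
    (ι : S →ₗ[Rᵐᵒᵖ] (R ⧸ I)) (hι : Function.Injective ι)
    (hSinj : Module.Injective Rᵐᵒᵖ S) (hM : IsMininjective R M)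
    (p : X →ₗ[Rᵐᵒᵖ] S) (hp : Function.Surjective p)
    (hker : Nonempty (↥(LinearMap.ker p) ≃ₗ[Rᵐᵒᵖ] M)) :
    ∃ s : S →ₗ[Rᵐᵒᵖ] X, p ∘ₗ s = LinearMap.id := by
  obtain ⟨ρ, hρ⟩ := hSinj.out ι hι LinearMap.id
  let φ : (X × (R ⧸ I)) →ₗ[Rᵐᵒᵖ] S :=
    p ∘ₗ (LinearMap.fst _ _ _) - ρ ∘ₗ (LinearMap.snd _ _ _)
  have hφ : ∀ z : X × (R ⧸ I), z ∈ LinearMap.ker φ ↔ p z.1 = ρ z.2 := by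
    intro z
    rw [LinearMap.mem_ker, LinearMap.sub_apply, LinearMap.comp_apply, LinearMap.comp_apply,
      LinearMap.fst_apply, LinearMap.snd_apply, sub_eq_zero]
  let Y := LinearMap.ker φ
  let q : ↥Y →ₗ[Rᵐᵒᵖ] (R ⧸ I) := (LinearMap.snd _ _ _) ∘ₗ Y.subtype
  have hqsurj : Function.Surjective q := by
    intro c
    obtain ⟨x, hx⟩ := hp (ρ c)
    exact ⟨⟨(x, c), (hφ _).2 hx⟩, rfl⟩
  -- forward map ker q → ker p
  have hfwd : ∀ z : ↥(LinearMap.ker q), ((z : ↥Y) : X × (R ⧸ I)).1 ∈ LinearMap.ker p := by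
    intro z
    have h1 : p ((z : ↥Y) : X × (R ⧸ I)).1 = ρ ((z : ↥Y) : X × (R ⧸ I)).2 := (hφ _).1 (z : ↥Y).2
    have h2 : ((z : ↥Y) : X × (R ⧸ I)).2 = 0 := z.2
    rw [LinearMap.mem_ker, h1, h2, map_zero]
  let fwd : ↥(LinearMap.ker q) →ₗ[Rᵐᵒᵖ] ↥(LinearMap.ker p) :=
    LinearMap.codRestrict _ ((LinearMap.fst _ _ _) ∘ₗ Y.subtype ∘ₗ (LinearMap.ker q).subtype) hfwd
  -- backward map
  have hbwd1 : ∀ x : ↥(LinearMap.ker p), ((x : X), (0 : R ⧸ I)) ∈ Y := by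
    intro x
    rw [hφ]
    show p ↑x = ρ 0
    rw [map_zero]
    exact x.2
  let j1 : ↥(LinearMap.ker p) →ₗ[Rᵐᵒᵖ] ↥Y :=
    LinearMap.codRestrict Y ((LinearMap.inl _ _ _) ∘ₗ (LinearMap.ker p).subtype) hbwd1
  have hbwd2 : ∀ x, j1 x ∈ LinearMap.ker q := fun x => rfl
  let bwd : ↥(LinearMap.ker p) →ₗ[Rᵐᵒᵖ] ↥(LinearMap.ker q) :=
    LinearMap.codRestrict _ j1 hbwd2
  have hfb : ∀ x, fwd (bwd x) = x := fun x => Subtype.ext rfl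
  have hbf : ∀ z, bwd (fwd z) = z := by
    intro z
    apply Subtype.ext
    apply Subtype.ext
    have h2 : ((z : ↥Y) : X × (R ⧸ I)).2 = 0 := z.2
    exact Prod.ext rfl h2.symm
  let e : ↥(LinearMap.ker q) ≃ₗ[Rᵐᵒᵖ] ↥(LinearMap.ker p) :=
    LinearEquiv.ofLinear fwd bwd (LinearMap.ext hfb) (LinearMap.ext hbf)
  have hkq : IsMininjective R ↥(LinearMap.ker q) :=
    IsMininjective.congr (e.trans hker.some).symm hM
  obtain ⟨σ, hσ⟩ := split_over_quot I hI q hqsurj hkq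
  refine ⟨(LinearMap.fst _ _ _) ∘ₗ Y.subtype ∘ₗ σ ∘ₗ ι, ?_⟩
  apply LinearMap.ext
  intro t
  show p (((σ (ι t) : ↥Y) : X × (R ⧸ I)).1) = t
  have h1 : p ((σ (ι t) : ↥Y) : X × (R ⧸ I)).1 = ρ ((σ (ι t) : ↥Y) : X × (R ⧸ I)).2 :=
    (hφ _).1 (σ (ι t) : ↥Y).2
  have h2 : ((σ (ι t) : ↥Y) : X × (R ⧸ I)).2 = ι t := hσ (ι t)
  rw [h1, h2, hρ, LinearMap.id_apply]

theorem extend_of_split {A : Type u} [Ring A] {N M : Type u}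
    [AddCommGroup N] [Module A N] [AddCommGroup M] [Module A M]
    (K : Submodule A N) (f : ↥K →ₗ[A] M)
    (hsplit : ∀ (X : Type u) [AddCommGroup X] [Module A X] (p : X →ₗ[A] (N ⧸ K)),
      Function.Surjective p → Nonempty (↥(LinearMap.ker p) ≃ₗ[A] M) →
        ∃ s : (N ⧸ K) →ₗ[A] X, p ∘ₗ s = LinearMap.id) :
    ∃ g : N →ₗ[A] M, ∀ x : ↥K, g ↑x = f x := by
  classical
  let W : Submodule A (M × N) := LinearMap.range (f.prod (-K.subtype))
  have hWle : W ≤ LinearMap.ker (K.mkQ ∘ₗ (LinearMap.snd A M N)) := by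
    rintro _ ⟨k, rfl⟩
    have : (f.prod (-K.subtype) k).2 = -(k : N) := rfl
    rw [LinearMap.mem_ker, LinearMap.comp_apply, LinearMap.snd_apply, this, map_neg,
      Submodule.mkQ_apply, neg_eq_zero, Submodule.Quotient.mk_eq_zero]
    exact k.2
  let p : ((M × N) ⧸ W) →ₗ[A] (N ⧸ K) := Submodule.liftQ W (K.mkQ ∘ₗ (LinearMap.snd A M N)) hWle
  have hpmk : ∀ mn : M × N, p (Submodule.Quotient.mk mn) = Submodule.Quotient.mk mn.2 := by
    intro mn
    rw [Submodule.liftQ_apply, LinearMap.comp_apply, LinearMap.snd_apply, Submodule.mkQ_apply]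
  let i : M →ₗ[A] ((M × N) ⧸ W) := W.mkQ ∘ₗ (LinearMap.inl A M N)
  have himk : ∀ m : M, i m = Submodule.Quotient.mk (m, 0) := fun m => rfl
  have hi : Function.Injective i := by
    rw [← LinearMap.ker_eq_bot, Submodule.eq_bot_iff]
    intro m hm
    rw [LinearMap.mem_ker, himk, Submodule.Quotient.mk_eq_zero] at hm
    obtain ⟨k, hk⟩ := hm
    have h2 : (k : N) = 0 := by
      have := congrArg Prod.snd hk
      simpa [neg_eq_zero] using this
    have hk0 : k = 0 := Subtype.ext h2
    have := congrArg Prod.fst hk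
    simp only [hk0, map_zero] at this
    exact this.symm
  have hrange_le : LinearMap.range i ≤ LinearMap.ker p := by
    rintro _ ⟨m, rfl⟩
    rw [LinearMap.mem_ker, himk, hpmk]
    exact (Submodule.Quotient.mk_eq_zero K).2 (zero_mem K)
  have hker_le : LinearMap.ker p ≤ LinearMap.range i := by
    intro z hz
    obtain ⟨⟨m, n⟩, rfl⟩ := Submodule.Quotient.mk_surjective W z
    rw [LinearMap.mem_ker, hpmk, Submodule.Quotient.mk_eq_zero] at hz
    refine ⟨m + f ⟨n, hz⟩, ?_⟩
    rw [himk, Submodule.Quotient.eq]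
    exact ⟨⟨n, hz⟩, by simp [W]⟩
  have hker : LinearMap.ker p = LinearMap.range i := le_antisymm hker_le hrange_le
  have hp : Function.Surjective p := by
    intro c
    obtain ⟨n, rfl⟩ := Submodule.Quotient.mk_surjective K c
    exact ⟨Submodule.Quotient.mk (0, n), hpmk _⟩
  let eM : M ≃ₗ[A] ↥(LinearMap.ker p) :=
    (LinearEquiv.ofInjective i hi).trans (LinearEquiv.ofEq _ _ hker.symm)
  obtain ⟨s, hs⟩ := hsplit ((M × N) ⧸ W) p hp ⟨eM.symm⟩
  have hps : ∀ z, p (s z) = z := fun z =>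
    congrArg (fun (m : (N ⧸ K) →ₗ[A] (N ⧸ K)) => m z) hs
  let j : N →ₗ[A] ((M × N) ⧸ W) := W.mkQ ∘ₗ (LinearMap.inr A M N)
  have hjmk : ∀ n : N, j n = Submodule.Quotient.mk (0, n) := fun n => rfl
  let d : N →ₗ[A] ((M × N) ⧸ W) := j - s ∘ₗ K.mkQ
  have hd : ∀ n, d n ∈ LinearMap.ker p := by
    intro n
    rw [LinearMap.mem_ker]
    show p (j n - s (K.mkQ n)) = 0
    rw [map_sub, hps, hjmk, hpmk, Submodule.mkQ_apply, sub_self]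
  refine ⟨eM.symm.toLinearMap ∘ₗ (d.codRestrict (LinearMap.ker p) hd), fun x => ?_⟩
  have hdx : d (x : N) = i (f x) := by
    show j (x : N) - s (K.mkQ (x : N)) = i (f x)
    have : K.mkQ (x : N) = 0 := by
      rw [Submodule.mkQ_apply, Submodule.Quotient.mk_eq_zero]; exact x.2
    rw [this, map_zero, sub_zero, hjmk, himk, Submodule.Quotient.eq]
    exact ⟨-x, by simp [W]⟩
  have hcd : (d.codRestrict (LinearMap.ker p) hd) (x : N) = eM (f x) := by
    apply Subtype.ext
    rw [LinearMap.codRestrict_apply, hdx]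
    rfl
  show eM.symm ((d.codRestrict (LinearMap.ker p) hd) (x : N)) = f x
  rw [hcd, LinearEquiv.symm_apply_apply]


variable (hcoh : RightStronglyMinCoherent R) (hqv : RightQuasiVRing.{u, u} R)
  (hsimple : ∀ (S : Type u) [AddCommGroup S] [Module Rᵐᵒᵖ S], IsSimpleModule Rᵐᵒᵖ S →
      (∃ f : S →ₗ[Rᵐᵒᵖ] R, Function.Injective f) ∨
        ∃ I : Submodule Rᵐᵒᵖ R, IsAtom I ∧
          ∃ f : S →ₗ[Rᵐᵒᵖ] (R ⧸ I), Function.Injective f)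

include hcoh hqv hsimple

theorem simple_split {M S X : Type u}
    [AddCommGroup M] [Module Rᵐᵒᵖ M] [AddCommGroup S] [Module Rᵐᵒᵖ S]
    [AddCommGroup X] [Module Rᵐᵒᵖ X]
    (hM : IsMininjective R M) (hS : IsSimpleModule Rᵐᵒᵖ S)
    (p : X →ₗ[Rᵐᵒᵖ] S) (hp : Function.Surjective p)
    (hker : Nonempty (↥(LinearMap.ker p) ≃ₗ[Rᵐᵒᵖ] M)) :
    ∃ s : S →ₗ[Rᵐᵒᵖ] X, p ∘ₗ s = LinearMap.id := by
  by_cases hiso : ∃ I : Submodule Rᵐᵒᵖ R, Nonempty (S ≃ₗ[Rᵐᵒᵖ] ↥I)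
  · obtain ⟨I, ⟨e⟩⟩ := hiso
    haveI : IsSimpleModule Rᵐᵒᵖ S := hS
    have hIsimple : IsSimpleModule Rᵐᵒᵖ ↥I := IsSimpleModule.congr e.symm
    have hIatom : IsAtom I := isSimpleModule_iff_isAtom.1 hIsimple
    let p' : X →ₗ[Rᵐᵒᵖ] ↥I := e.toLinearMap ∘ₗ p
    have hp' : Function.Surjective p' := by
      rw [LinearMap.coe_comp]
      exact e.surjective.comp hp
    have hker' : LinearMap.ker p' = LinearMap.ker p := by
      rw [LinearMap.ker_comp, LinearEquiv.ker, Submodule.comap_bot]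
    have hmin : IsMininjective R ↥(LinearMap.ker p') := by
      rw [hker']
      exact IsMininjective.congr hker.some.symm hM
    obtain ⟨s', hs'⟩ := hcoh I hIatom X p' hp' hmin
    refine ⟨s' ∘ₗ e.toLinearMap, ?_⟩
    apply LinearMap.ext
    intro t
    have h1 : p' (s' (e t)) = e t :=
      congrArg (fun (m : ↥I →ₗ[Rᵐᵒᵖ] ↥I) => m (e t)) hs'
    have h2 : e (p (s' (e t))) = e t := h1
    show p (s' (e t)) = t
    exact e.injective h2
  · have hSinj : Module.Injective Rᵐᵒᵖ S := hqv S hS hiso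
    rcases hsimple S hS with ⟨f, hf⟩ | ⟨I, hI, f, hf⟩
    · exact absurd ⟨LinearMap.range f, ⟨LinearEquiv.ofInjective f hf⟩⟩ hiso
    · exact split_of_emb I hI f hf hSinj hM p hp hker

theorem cover_extend {M : Type u} [AddCommGroup M] [Module Rᵐᵒᵖ M]
    (hM : IsMininjective R M) {K K' : Submodule Rᵐᵒᵖ R} (hcov : K ⋖ K')
    (f : ↥K →ₗ[Rᵐᵒᵖ] M) :
    ∃ g : ↥K' →ₗ[Rᵐᵒᵖ] M, ∀ (x : R) (hx : x ∈ K), g ⟨x, hcov.le hx⟩ = f ⟨x, hx⟩ := by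
  have hle : K ≤ K' := hcov.le
  have hS : IsSimpleModule Rᵐᵒᵖ (↥K' ⧸ Submodule.comap K'.subtype K) :=
    (covBy_iff_quot_is_simple hle).1 hcov
  let eK : ↥(Submodule.comap K'.subtype K) ≃ₗ[Rᵐᵒᵖ] ↥K := Submodule.comapSubtypeEquivOfLe hle
  obtain ⟨g, hg⟩ := extend_of_split (Submodule.comap K'.subtype K) (f ∘ₗ eK.toLinearMap)
    (fun X _ _ p hp hker => simple_split hcoh hqv hsimple hM hS p hp hker)
  refine ⟨g, fun x hx => ?_⟩
  have h1 := hg ⟨⟨x, hle hx⟩, hx⟩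
  exact h1

theorem extend_to_top (hart : IsArtinian Rᵐᵒᵖ R) {M : Type u}
    [AddCommGroup M] [Module Rᵐᵒᵖ M] (hM : IsMininjective R M)
    (K : Submodule Rᵐᵒᵖ R) (f : ↥K →ₗ[Rᵐᵒᵖ] M) :
    ∃ g : R →ₗ[Rᵐᵒᵖ] M, ∀ x : ↥K, g ↑x = f x := by
  haveI := hart
  haveI : Fact (Function.Injective ⇑K.subtype) := ⟨Submodule.injective_subtype K⟩
  set E := Module.Baer.extensionOfMax K.subtype f with hE
  have htop : E.domain = ⊤ := by
    by_contra hne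
    have hwf : WellFounded ((· < ·) : Submodule Rᵐᵒᵖ R → Submodule Rᵐᵒᵖ R → Prop) :=
      IsWellFounded.wf
    obtain ⟨K', hmem, hmin⟩ := hwf.has_min {L | E.domain < L}
      ⟨⊤, lt_top_iff_ne_top.2 hne⟩
    have hcov : E.domain ⋖ K' := ⟨hmem, fun c h1 h2 => hmin c h1 h2⟩
    obtain ⟨g, hg⟩ := cover_extend hcoh hqv hsimple hM hcov E.toLinearPMap.toFun
    let E' : Module.Baer.ExtensionOf K.subtype f :=
      { domain := K'
        toFun := g
        le := le_trans E.le hcov.le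
        is_extension := by
          intro m
          have h1 := E.is_extension m
          have h2 := hg (K.subtype m) (E.le ⟨m, rfl⟩)
          rw [h1]
          exact h2.symm }
    have hle : E ≤ E' := by
      show E.toLinearPMap ≤ E'.toLinearPMap
      refine ⟨hcov.le, fun x y hxy => ?_⟩
      have hx' : (x : R) ∈ E.domain := x.2
      have h1 := hg (x : R) hx'
      have hy : y = ⟨(x : R), hcov.le hx'⟩ := Subtype.ext hxy.symm
      rw [hy]
      exact h1.symm
    have heq := Module.Baer.extensionOfMax_is_max K.subtype f E' hle
    have : K' = E.domain := congrArg (fun a : Module.Baer.ExtensionOf K.subtype f => a.toLinearPMap.domain) heq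
    exact absurd this (ne_of_gt hmem)
  refine ⟨E.toLinearPMap.toFun ∘ₗ LinearMap.codRestrict E.domain LinearMap.id
    (fun x => htop.symm ▸ Submodule.mem_top), fun x => ?_⟩
  exact (E.is_extension x).symm

end Helpers

/-- If `R` is right Artinian, right strongly min-coherent, a right quasi
V-ring, and every simple right `R`-module embeds either in `R` or in `R/I` for some minimal
right ideal `I`, then every mininjective right `R`-module is injective. -/
theorem mininjective_injective_of_conditions (R : Type u) [Ring R]
    (hart : IsArtinian Rᵐᵒᵖ R) (hcoh : RightStronglyMinCoherent R)
    (hqv : RightQuasiVRing.{u, u} R)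
    (hsimple : ∀ (S : Type u) [AddCommGroup S] [Module Rᵐᵒᵖ S], IsSimpleModule Rᵐᵒᵖ S →
      (∃ f : S →ₗ[Rᵐᵒᵖ] R, Function.Injective f) ∨
        ∃ I : Submodule Rᵐᵒᵖ R, IsAtom I ∧
          ∃ f : S →ₗ[Rᵐᵒᵖ] (R ⧸ I), Function.Injective f) :
    ∀ (M : Type u) [AddCommGroup M] [Module Rᵐᵒᵖ M],
      IsMininjective R M → Module.Injective Rᵐᵒᵖ M := by
  intro M _ _ hM
  refine Module.Baer.injective ?_
  intro J gJ
  let e := myOpEquiv R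
  let K : Submodule Rᵐᵒᵖ R := Submodule.comap e.toLinearMap J
  let r : ↥K →ₗ[Rᵐᵒᵖ] ↥J :=
    LinearMap.codRestrict J (e.toLinearMap ∘ₗ K.subtype) (fun x => x.2)
  obtain ⟨G, hG⟩ := extend_to_top hcoh hqv hsimple hart hM K (gJ ∘ₗ r)
  refine ⟨G ∘ₗ e.symm.toLinearMap, fun x hx => ?_⟩
  have hmem : e.symm x ∈ K := by
    show e (e.symm x) ∈ J
    rw [e.apply_symm_apply]
    exact hx
  have h1 := hG ⟨e.symm x, hmem⟩
  have h2 : r ⟨e.symm x, hmem⟩ = ⟨x, hx⟩ := by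
    apply Subtype.ext
    show e (e.symm x) = x
    exact e.apply_symm_apply x
  rw [LinearMap.comp_apply, h2] at h1
  exact h1
end

section
/- Let R be a ring. For each a ∈ R such that Ra is a minimal left ideal of R, the quotient R/aR is a right R-module and its character module (R/aR)⁺ = Hom_ℤ(R/aR, ℚ/ℤ) is a left R-module. Let F be the direct product of the left R-modules (R/aR)⁺, taken over all a ∈ R with Ra a minimal left ideal. Then the following are equivalent: (1) every mininjective left R-module is injective; (2) F is an indigent left R-module and R is left min-coherent. -/
universe u v w v'

open MulOpposite

section CharacterDual

/-- The character module `A⁺ = Hom_ℤ(A, ℚ/ℤ)` of an abelian group `A`. -/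
def CharacterDual (A : Type v) [AddCommGroup A] : Type v := A →+ AddCircle (1 : ℚ)

instance (A : Type v) [AddCommGroup A] : AddCommGroup (CharacterDual A) :=
  inferInstanceAs (AddCommGroup (A →+ AddCircle (1 : ℚ)))

instance (A : Type v) [AddCommGroup A] : FunLike (CharacterDual A) A (AddCircle (1 : ℚ)) :=
  inferInstanceAs (FunLike (A →+ AddCircle (1 : ℚ)) A (AddCircle (1 : ℚ)))

instance (A : Type v) [AddCommGroup A] :
    AddMonoidHomClass (CharacterDual A) A (AddCircle (1 : ℚ)) :=
  inferInstanceAs (AddMonoidHomClass (A →+ AddCircle (1 : ℚ)) A (AddCircle (1 : ℚ)))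

/-- If `A` is a right `R`-module, then `A⁺` is a left `R`-module via `(r • φ) a = φ (a • r)`. -/
instance (R : Type u) [Ring R] (A : Type v) [AddCommGroup A] [Module Rᵐᵒᵖ A] :
    Module R (CharacterDual A) where
  smul r f := (f : A →+ AddCircle (1 : ℚ)).comp (DistribMulAction.toAddMonoidHom A (op r))
  one_smul f := AddMonoidHom.ext fun a => by
    show f ((op (1 : R)) • a) = f a
    rw [op_one, one_smul]
  mul_smul r s f := AddMonoidHom.ext fun a => by
    show f (op (r * s) • a) = f (op s • op r • a)
    rw [← mul_smul, ← op_mul]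
  smul_zero r := rfl
  smul_add r f g := rfl
  add_smul r s f := AddMonoidHom.ext fun a => by
    show f (op (r + s) • a) = f (op r • a) + f (op s • a)
    rw [← map_add, ← add_smul, ← op_add]
  zero_smul f := AddMonoidHom.ext fun a => by
    show f (op (0 : R) • a) = 0
    rw [op_zero, zero_smul, map_zero]

end CharacterDual

section Subinj
variable (R : Type u) [Ring R]

/-- `M` is `N`-subinjective if every homomorphism `N → M` extends along every embedding of
`N` into an injective module. -/
def Subinjective (N : Type v) [AddCommGroup N] [Module R N]
    (M : Type w) [AddCommGroup M] [Module R M] : Prop :=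
  ∀ (E : Type v') [AddCommGroup E] [Module R E], Module.Injective R E →
    ∀ i : N →ₗ[R] E, Function.Injective i → ∀ f : N →ₗ[R] M,
      ∃ g : E →ₗ[R] M, g ∘ₗ i = f

/-- `M` is indigent if its subinjectivity domain consists exactly of the injective modules. -/
def Indigent (M : Type w) [AddCommGroup M] [Module R M] : Prop :=
  ∀ (N : Type v) [AddCommGroup N] [Module R N],
    (Subinjective.{u, v, w, v'} R N M ↔ Module.Injective R N)

end Subinj

section Helpers

open MulOpposite

variable {R : Type u} [Ring R]

@[simp] lemma CharacterDual.add_apply {A : Type v} [AddCommGroup A]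
    (φ φ' : CharacterDual A) (x : A) : (φ + φ') x = φ x + φ' x := rfl

@[simp] lemma CharacterDual.smul_apply {A : Type v} [AddCommGroup A] [Module Rᵐᵒᵖ A]
    (r : R) (φ : CharacterDual A) (x : A) : (r • φ) x = φ (op r • x) := rfl

lemma CharacterDual.ext' {A : Type v} [AddCommGroup A] {φ φ' : CharacterDual A}
    (h : ∀ x, φ x = φ' x) : φ = φ' := DFunLike.ext _ _ h

variable (R) in
/-- The underlying function of `mkCharMap`. -/
noncomputable def mkCharFun {X : Type u} [AddCommGroup X] [Module R X] (a : R)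
    (c : X →ₗ[ℤ] AddCircle (1 : ℚ)) (hc : ∀ x : X, c (a • x) = 0) (x : X) :
    CharacterDual (R ⧸ Submodule.span Rᵐᵒᵖ ({a} : Set R)) :=
  ((Submodule.liftQ ((Submodule.span Rᵐᵒᵖ ({a} : Set R)).restrictScalars ℤ)
      ((AddMonoidHom.mk' (fun r : R => c (r • x))
        (fun r r' => by show c ((r + r') • x) = _; rw [add_smul, map_add])).toIntLinearMap)
      (by
        intro y hy
        obtain ⟨s, hs⟩ := Submodule.mem_span_singleton.mp
          (show y ∈ Submodule.span Rᵐᵒᵖ ({a} : Set R) from hy)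
        have hy' : y = a * s.unop := by rw [← hs]; rfl
        simp only [LinearMap.mem_ker, AddMonoidHom.coe_toIntLinearMap, AddMonoidHom.mk'_apply,
          hy', mul_smul]
        exact hc _)) ∘ₗ
    (Submodule.Quotient.restrictScalarsEquiv ℤ
      (Submodule.span Rᵐᵒᵖ ({a} : Set R))).symm.toLinearMap).toAddMonoidHom

lemma mkCharFun_apply {X : Type u} [AddCommGroup X] [Module R X] (a : R)
    (c : X →ₗ[ℤ] AddCircle (1 : ℚ)) (hc : ∀ x : X, c (a • x) = 0) (x : X) (r : R) :
    mkCharFun R a c hc x (Submodule.Quotient.mk r) = c (r • x) := by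
  unfold mkCharFun
  erw [LinearMap.toAddMonoidHom_coe, LinearMap.comp_apply, LinearEquiv.coe_coe,
    Submodule.Quotient.restrictScalarsEquiv_symm_mk, Submodule.liftQ_apply]

variable (R) in
/-- From an integral character `c` on an `R`-module `X` vanishing on `a • X`, build the
`R`-linear map `X →ₗ (R ⧸ aR)⁺`, `x ↦ ([r] ↦ c (r • x))`. -/
noncomputable def mkCharMap {X : Type u} [AddCommGroup X] [Module R X] (a : R)
    (c : X →ₗ[ℤ] AddCircle (1 : ℚ)) (hc : ∀ x : X, c (a • x) = 0) :
    X →ₗ[R] CharacterDual (R ⧸ Submodule.span Rᵐᵒᵖ ({a} : Set R)) where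
  toFun := mkCharFun R a c hc
  map_add' x y := CharacterDual.ext' fun q => by
    obtain ⟨r, rfl⟩ := Submodule.Quotient.mk_surjective _ q
    rw [CharacterDual.add_apply, mkCharFun_apply, mkCharFun_apply, mkCharFun_apply,
      smul_add, map_add]
  map_smul' s x := CharacterDual.ext' fun q => by
    obtain ⟨r, rfl⟩ := Submodule.Quotient.mk_surjective _ q
    rw [RingHom.id_apply, CharacterDual.smul_apply, mkCharFun_apply, ← Submodule.Quotient.mk_smul,
      mkCharFun_apply, op_smul_eq_mul, mul_smul]

lemma mkCharMap_apply {X : Type u} [AddCommGroup X] [Module R X] (a : R)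
    (c : X →ₗ[ℤ] AddCircle (1 : ℚ)) (hc : ∀ x : X, c (a • x) = 0) (x : X) (r : R) :
    mkCharMap R a c hc x (Submodule.Quotient.mk r) = c (r • x) :=
  mkCharFun_apply a c hc x r

end Helpers
section Helpers2

open MulOpposite

variable {R : Type u} [Ring R]

lemma exists_smul_eq_of_mininjective {M : Type v} [AddCommGroup M] [Module R M]
    (hM : IsMininjectiveLeft R M) {a : R} (ha : IsAtom (Submodule.span R ({a} : Set R)))
    {x : M} (hx : ∀ r : R, r * a = 0 → r • x = 0) : ∃ m₀ : M, x = a • m₀ := by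
  set I : Submodule R R := Submodule.span R ({a} : Set R)
  have haI : a ∈ I := Submodule.mem_span_singleton_self a
  set π : R →ₗ[R] ↥I := LinearMap.toSpanSingleton R ↥I ⟨a, haI⟩ with hπ
  have hπs : Function.Surjective π := by
    rintro ⟨y, hy⟩
    obtain ⟨r, hr⟩ := Submodule.mem_span_singleton.mp hy
    exact ⟨r, Subtype.ext (by simpa [π, LinearMap.toSpanSingleton_apply] using hr)⟩
  have hker : LinearMap.ker π ≤ LinearMap.ker (LinearMap.toSpanSingleton R M x) := by
    intro r hr
    have : r • a = 0 := congrArg Subtype.val (LinearMap.mem_ker.mp hr)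
    simpa [LinearMap.mem_ker, LinearMap.toSpanSingleton_apply] using
      hx r (by simpa [smul_eq_mul] using this)
  set e := LinearMap.quotKerEquivOfSurjective π hπs with he
  set φ : ↥I →ₗ[R] M :=
    (Submodule.liftQ (LinearMap.ker π) (LinearMap.toSpanSingleton R M x) hker) ∘ₗ
      e.symm.toLinearMap with hφ
  have key : φ ⟨a, haI⟩ = x := by
    have h1 : π 1 = ⟨a, haI⟩ := by simp [π, LinearMap.toSpanSingleton_apply]
    have h2 : e (Submodule.Quotient.mk 1) = ⟨a, haI⟩ := by rw [← h1]; rfl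
    have h3 : e.symm ⟨a, haI⟩ = Submodule.Quotient.mk 1 := by
      rw [LinearEquiv.symm_apply_eq, h2]
    simp [φ, h3, Submodule.liftQ_apply, LinearMap.toSpanSingleton_apply]
  obtain ⟨g, hg⟩ := hM I ha φ
  refine ⟨g 1, ?_⟩
  have h4 : g ↑(⟨a, haI⟩ : ↥I) = x := by rw [hg, key]
  have h5 : a • g 1 = g (a • (1 : R)) := (map_smul g a 1).symm
  rw [h5, smul_eq_mul, mul_one, ← h4]

variable (R) in
abbrev MinIdx : Type u := {a : R // IsAtom (Submodule.span R ({a} : Set R))}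

variable (R) in
abbrev FMod : Type u :=
  (a : MinIdx R) → CharacterDual (R ⧸ Submodule.span Rᵐᵒᵖ ({(a : R)} : Set R))

lemma exists_component_ext {M E : Type u} [AddCommGroup M] [Module R M]
    [AddCommGroup E] [Module R E]
    (hM : IsMininjectiveLeft R M) (i : M →ₗ[R] E) (hi : Function.Injective i)
    (f : M →ₗ[R] FMod R) (a₀ : MinIdx R) :
    ∃ G : E →ₗ[R] CharacterDual (R ⧸ Submodule.span Rᵐᵒᵖ ({(a₀ : R)} : Set R)),
      ∀ m, G (i m) = f m a₀ := by
  set a : R := (a₀ : R) with ha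
  set ψ : M →ₗ[ℤ] AddCircle (1 : ℚ) :=
    (AddMonoidHom.mk' (fun m => f m a₀ (Submodule.Quotient.mk 1))
      (fun m m' => by
        show f (m + m') a₀ _ = _
        rw [map_add]; rfl)).toIntLinearMap with hψ
  have hψmk : ∀ m : M, ψ m = f m a₀ (Submodule.Quotient.mk 1) := fun _ => rfl
  have hψsmul : ∀ (r : R) (m : M), ψ (r • m) = f m a₀ (Submodule.Quotient.mk r) := by
    intro r m
    rw [hψmk, map_smul, Pi.smul_apply, CharacterDual.smul_apply, ← Submodule.Quotient.mk_smul,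
      op_smul_eq_mul, one_mul]
  have hψa : ∀ m : M, ψ (a • m) = 0 := by
    intro m
    rw [hψsmul]
    have : (Submodule.Quotient.mk a : R ⧸ Submodule.span Rᵐᵒᵖ ({a} : Set R)) = 0 :=
      (Submodule.Quotient.mk_eq_zero _).mpr (Submodule.mem_span_singleton_self a)
    rw [this, map_zero]
  set aE : Submodule ℤ E :=
    LinearMap.range ((DistribMulAction.toAddMonoidHom E a).toIntLinearMap) with haE
  set k : M →ₗ[ℤ] E ⧸ aE := aE.mkQ ∘ₗ i.toAddMonoidHom.toIntLinearMap with hk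
  have hker : LinearMap.ker k ≤ LinearMap.ker ψ := by
    intro x hxk
    have hmem : i x ∈ aE := by
      have : aE.mkQ (i x) = 0 := LinearMap.mem_ker.mp hxk
      exact (Submodule.Quotient.mk_eq_zero aE).mp this
    obtain ⟨e', he'⟩ := hmem
    have he'' : a • e' = i x := he'
    have hx0 : ∀ r : R, r * a = 0 → r • x = 0 := by
      intro r hr
      apply hi
      rw [map_smul, map_zero, ← he'', smul_smul, hr, zero_smul]
    obtain ⟨m₀, hm₀⟩ := exists_smul_eq_of_mininjective hM a₀.2 hx0
    show ψ x = 0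
    rw [hm₀]; exact hψa m₀
  obtain ⟨h, hh⟩ := (Module.Baer.of_divisible (AddCircle (1 : ℚ))).extension_property
    (LinearMap.range k).subtype (Submodule.injective_subtype _)
    ((Submodule.liftQ (LinearMap.ker k) ψ hker) ∘ₗ
      (LinearMap.quotKerEquivRange k).symm.toLinearMap)
  set ψ' : E →ₗ[ℤ] AddCircle (1 : ℚ) := h ∘ₗ aE.mkQ with hψ'
  have hψ'a : ∀ e, ψ' (a • e) = 0 := by
    intro e
    have : aE.mkQ (a • e) = 0 := (Submodule.Quotient.mk_eq_zero aE).mpr ⟨e, rfl⟩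
    show h (aE.mkQ (a • e)) = 0
    rw [this, map_zero]
  have hψ'i : ∀ m, ψ' (i m) = ψ m := by
    intro m
    have h0 : ψ' (i m) = h ((LinearMap.range k).subtype ⟨k m, LinearMap.mem_range_self k m⟩) :=
      rfl
    have h1 := LinearMap.congr_fun hh ⟨k m, LinearMap.mem_range_self k m⟩
    rw [LinearMap.comp_apply] at h1
    rw [h0, h1, LinearMap.comp_apply]
    have h2 : (LinearMap.quotKerEquivRange k).symm ⟨k m, LinearMap.mem_range_self k m⟩ =
        Submodule.Quotient.mk m := by
      rw [LinearEquiv.symm_apply_eq]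
      exact Subtype.ext (LinearMap.quotKerEquivRange_apply_mk k m).symm
    show (Submodule.liftQ (LinearMap.ker k) ψ hker)
        ((LinearMap.quotKerEquivRange k).symm ⟨k m, LinearMap.mem_range_self k m⟩) = ψ m
    rw [h2, Submodule.liftQ_apply]
  refine ⟨mkCharMap R a ψ' hψ'a, ?_⟩
  intro m
  refine CharacterDual.ext' fun q => ?_
  obtain ⟨r, rfl⟩ := Submodule.Quotient.mk_surjective _ q
  rw [mkCharMap_apply, ← map_smul i r m, hψ'i, hψsmul]

lemma subinjective_F_of_mininjective {M : Type u} [AddCommGroup M] [Module R M]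
    (hM : IsMininjectiveLeft R M) : Subinjective.{u, u, u, u} R M (FMod R) := by
  intro E _ _ _hE i hi f
  choose G hG using fun a₀ => exists_component_ext hM i hi f a₀
  refine ⟨LinearMap.pi G, ?_⟩
  refine LinearMap.ext fun m => ?_
  funext a₀
  exact hG a₀ m

end Helpers2
section Helpers3

open MulOpposite CategoryTheory

variable {R : Type u} [Ring R]

lemma atom_gen {I : Submodule R R} (hI : IsAtom I) :
    ∃ a : R, a ∈ I ∧ Submodule.span R ({a} : Set R) = I ∧
      IsAtom (Submodule.span R ({a} : Set R)) := by
  obtain ⟨a, haI, ha0⟩ := (Submodule.ne_bot_iff I).mp hI.1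
  have hle : Submodule.span R ({a} : Set R) ≤ I := by
    rw [Submodule.span_le, Set.singleton_subset_iff]; exact haI
  have hne : Submodule.span R ({a} : Set R) ≠ ⊥ := by
    rw [Ne, Submodule.span_singleton_eq_bot]; exact ha0
  have heq : Submodule.span R ({a} : Set R) = I := by
    rcases lt_or_eq_of_le hle with h | h
    · exact absurd (hI.2 _ h) hne
    · exact h
  exact ⟨a, haI, heq, heq ▸ hI⟩

variable (R) in
lemma exists_injEmb (N : Type u) [AddCommGroup N] [Module R N] :
    ∃ (E : Type u) (_ : AddCommGroup E) (_ : Module R E),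
      Module.Injective R E ∧ ∃ e : N →ₗ[R] E, Function.Injective e := by
  letI := ModuleCat.enoughInjectives.{u, u} R
  let C : ModuleCat.{u} R := ModuleCat.of R N
  refine ⟨(Injective.under C).carrier, inferInstance, inferInstance, ?_, (Injective.ι C).hom, ?_⟩
  · have h : Injective (ModuleCat.of R (Injective.under C).carrier) := Injective.injective_under C
    exact Module.injective_module_of_injective_object _ _ (inj := h)
  · exact (ModuleCat.mono_iff_injective (Injective.ι C)).mp inferInstance

lemma mininjective_of_subinjective_F {N : Type u} [AddCommGroup N] [Module R N]
    (hsub : Subinjective.{u, u, u, u} R N (FMod R)) : IsMininjectiveLeft R N := by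
  classical
  intro I hI f
  obtain ⟨a, haI, hspan, hatom⟩ := atom_gen hI
  obtain ⟨E, _, _, hEinj, j, hj⟩ := exists_injEmb R N
  obtain ⟨g, hg⟩ := hEinj.out I.subtype (Submodule.injective_subtype I) (j ∘ₗ f)
  set a₀ : MinIdx R := ⟨a, hatom⟩ with ha₀
  set n₀ : N := f ⟨a, haI⟩ with hn₀
  have h1 : g a = j n₀ := hg ⟨a, haI⟩
  have hje : j n₀ = a • g 1 := by
    rw [← h1, ← map_smul, smul_eq_mul, mul_one]
  have key : ∃ n₁ : N, n₀ = a • n₁ := by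
    by_contra hno
    push_neg at hno
    set aN : Submodule ℤ N :=
      LinearMap.range ((DistribMulAction.toAddMonoidHom N a).toIntLinearMap) with haN
    have hne : (Submodule.Quotient.mk n₀ : N ⧸ aN) ≠ 0 := by
      rw [Ne, Submodule.Quotient.mk_eq_zero]
      rintro ⟨y, hy⟩
      exact hno y (show n₀ = a • y from hy.symm)
    obtain ⟨χ, hχ⟩ := CharacterModule.exists_character_apply_ne_zero_of_ne_zero hne
    set χ' : (N ⧸ aN) →+ AddCircle (1 : ℚ) := χ with hχeq
    set c : N →ₗ[ℤ] AddCircle (1 : ℚ) := (χ'.comp aN.mkQ.toAddMonoidHom).toIntLinearMap with hc'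
    have hc : ∀ x : N, c (a • x) = 0 := by
      intro x
      have h0 : aN.mkQ (a • x) = 0 := (Submodule.Quotient.mk_eq_zero aN).mpr ⟨x, rfl⟩
      show χ' (aN.mkQ (a • x)) = 0
      rw [h0, map_zero]
    set fχ := mkCharMap R a c hc with hfχ
    set ffam : (b : MinIdx R) → N →ₗ[R] CharacterDual (R ⧸ Submodule.span Rᵐᵒᵖ ({(b : R)} : Set R)) :=
      Function.update (fun b => 0) a₀ fχ with hffam
    have hfam : ffam a₀ = fχ := by
      rw [hffam]
      exact Function.update_self (β := fun b : MinIdx R =>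
        N →ₗ[R] CharacterDual (R ⧸ Submodule.span Rᵐᵒᵖ ({(b : R)} : Set R))) a₀ fχ (fun _ => 0)
    obtain ⟨G, hG⟩ := hsub E hEinj j hj (LinearMap.pi ffam)
    have h3 : (LinearMap.pi ffam) n₀ = G (j n₀) := (LinearMap.congr_fun hG n₀).symm
    have h4 : fχ n₀ = a • (G (g 1) a₀) := by
      have h5 := congrFun h3 a₀
      rw [LinearMap.pi_apply, hfam] at h5
      rw [h5, hje, map_smul, Pi.smul_apply]
    have h6 := congrArg (fun φ => φ ((Submodule.Quotient.mk 1 : R ⧸ Submodule.span Rᵐᵒᵖ ({a} : Set R)))) h4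
    simp only [hfχ, mkCharMap_apply, one_smul, CharacterDual.smul_apply] at h6
    have h7 : (op a • (Submodule.Quotient.mk 1 : R ⧸ Submodule.span Rᵐᵒᵖ ({a} : Set R))) = 0 := by
      rw [← Submodule.Quotient.mk_smul, op_smul_eq_mul, one_mul]
      exact (Submodule.Quotient.mk_eq_zero _).mpr (Submodule.mem_span_singleton_self a)
    rw [h7, map_zero] at h6
    exact hχ h6
  obtain ⟨n₁, hn₁⟩ := key
  refine ⟨LinearMap.toSpanSingleton R N n₁, fun x => ?_⟩
  obtain ⟨r, hr⟩ := Submodule.mem_span_singleton.mp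
    (show (x : R) ∈ Submodule.span R ({a} : Set R) by rw [hspan]; exact x.2)
  have hx : x = r • (⟨a, haI⟩ : ↥I) := Subtype.ext (by rw [← hr]; rfl)
  have h8 : (LinearMap.toSpanSingleton R N n₁) ((r • (⟨a, haI⟩ : ↥I) : ↥I) : R) =
      r • (a • n₁) := by
    show (r • a : R) • n₁ = _
    rw [smul_eq_mul, mul_smul]
  rw [hx, map_smul, h8, ← hn₁]
section Helpers4

open MulOpposite DirectSum

variable {R : Type u} [Ring R]

lemma subinjective_of_injective {N M : Type u} [AddCommGroup N] [Module R N]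
    [AddCommGroup M] [Module R M] (hN : Module.Injective R N) :
    Subinjective.{u, u, u, u} R N M := by
  intro E _ _ _hE i hi f
  obtain ⟨ρ, hρ⟩ := hN.out i hi LinearMap.id
  refine ⟨f ∘ₗ ρ, LinearMap.ext fun x => ?_⟩
  show f (ρ (i x)) = f x
  rw [hρ x, LinearMap.id_apply]

lemma mininjective_directSum (E : ℕ → Type u) [∀ n, AddCommGroup (E n)] [∀ n, Module R (E n)]
    (hE : ∀ n, Module.Injective R (E n)) : IsMininjectiveLeft R (⨁ n, E n) := by
  classical
  intro I hI f
  obtain ⟨a, haI, hspan, hatom⟩ := atom_gen hI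
  set w : ⨁ n, E n := f ⟨a, haI⟩ with hw
  obtain ⟨s, hs⟩ := w.support'.out
  set S := s.toFinset with hS
  have hext : ∀ n, ∃ gn : R →ₗ[R] E n, ∀ x : ↥I,
      gn ↑x = (DirectSum.component R ℕ E n) (f x) := by
    intro n
    obtain ⟨gn, hgn⟩ := (hE n).out I.subtype (Submodule.injective_subtype I)
      ((DirectSum.component R ℕ E n) ∘ₗ f)
    exact ⟨gn, fun x => hgn x⟩
  choose gn hgn using hext
  refine ⟨{ toFun := fun r => DFinsupp.mk S (fun n => gn n r)
            map_add' := ?_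
            map_smul' := ?_ }, ?_⟩
  · intro r r'
    refine DFinsupp.ext fun n => ?_
    rw [DFinsupp.add_apply, DFinsupp.mk_apply, DFinsupp.mk_apply, DFinsupp.mk_apply]
    split_ifs with hn
    · rw [map_add]
    · rw [add_zero]
  · intro r r'
    refine DFinsupp.ext fun n => ?_
    rw [RingHom.id_apply, DFinsupp.smul_apply, DFinsupp.mk_apply, DFinsupp.mk_apply]
    split_ifs with hn
    · rw [map_smul]
    · rw [smul_zero]
  · intro x
    obtain ⟨r, hr⟩ := Submodule.mem_span_singleton.mp
      (show (x : R) ∈ Submodule.span R ({a} : Set R) by rw [hspan]; exact x.2)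
    have hx : x = r • (⟨a, haI⟩ : ↥I) := Subtype.ext (by rw [← hr]; rfl)
    refine DFinsupp.ext fun n => ?_
    show (DFinsupp.mk S (fun m => gn m ↑x)) n = (f x) n
    rw [DFinsupp.mk_apply]
    split_ifs with hn
    · rw [hgn n x]; rfl
    · have hwn : w n = 0 := (hs n).resolve_left fun h => hn (Multiset.mem_toFinset.mpr h)
      have : f x = r • w := by rw [hx, map_smul, hw]
      rw [this, DFinsupp.smul_apply, hwn, smul_zero]

end Helpers4
section Helpers5

open MulOpposite DirectSum

variable {R : Type u} [Ring R]

lemma finitePresentation_of_mininjective_injective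
    (h1 : ∀ (M : Type u) [AddCommGroup M] [Module R M],
      IsMininjectiveLeft R M → Module.Injective R M)
    (I : Submodule R R) (hI : IsAtom I) : Module.FinitePresentation R ↥I := by
  classical
  obtain ⟨a, haI, hspan, hatom⟩ := atom_gen hI
  set π : R →ₗ[R] ↥I := LinearMap.toSpanSingleton R ↥I ⟨a, haI⟩ with hπ
  have hπs : Function.Surjective π := by
    rintro ⟨y, hy⟩
    obtain ⟨r, hr⟩ := Submodule.mem_span_singleton.mp (by rw [hspan]; exact hy)
    exact ⟨r, Subtype.ext (by simpa [π, LinearMap.toSpanSingleton_apply] using hr)⟩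
  have hker : (LinearMap.ker π).FG := by
    by_contra hK
    set K := LinearMap.ker π with hKdef
    have step : ∀ J : {J : Submodule R R // J.FG ∧ J ≤ K},
        ∃ J' : {J : Submodule R R // J.FG ∧ J ≤ K}, J.1 < J'.1 := by
      rintro ⟨J, hJfg, hJle⟩
      have hne : J ≠ K := fun h => hK (h ▸ hJfg)
      obtain ⟨x, hxK, hxJ⟩ := SetLike.exists_of_lt (lt_of_le_of_ne hJle hne)
      refine ⟨⟨J ⊔ Submodule.span R {x}, hJfg.sup (Submodule.fg_span_singleton x),
        sup_le hJle (by rwa [Submodule.span_le, Set.singleton_subset_iff])⟩, ?_⟩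
      refine lt_of_le_of_ne le_sup_left fun h => hxJ ?_
      have h' : J = J ⊔ Submodule.span R {x} := h
      rw [h']
      exact le_sup_right (α := Submodule R R) (Submodule.mem_span_singleton_self x)
    choose F hF using step
    set c : ℕ → {J : Submodule R R // J.FG ∧ J ≤ K} :=
      fun n => F^[n] ⟨⊥, Submodule.fg_bot, bot_le⟩ with hc
    have hmono : StrictMono (fun n => (c n).1) := strictMono_nat_of_lt_succ (fun n => by
      have hstep : c (n + 1) = F (c n) := Function.iterate_succ_apply' F n _
      show (c n).1 < (c (n + 1)).1
      rw [hstep]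
      exact hF (c n))
    set Kω : Submodule R R := ⨆ n, (c n).1 with hKω
    have hmem : ∀ x : ↥Kω, ∃ n, (x : R) ∈ (c n).1 := fun x =>
      (Submodule.mem_iSup_of_directed _ (hmono.monotone.directed_le)).mp x.2
    obtain ⟨E, acg, mod, hInj, em, hem⟩ :
        ∃ (E : ℕ → Type u) (_ : ∀ n, AddCommGroup (E n)) (_ : ∀ n, Module R (E n)),
          (∀ n, @Module.Injective R _ (E n) _ _) ∧
          ∃ em : (n : ℕ) → ((R ⧸ (c n).1) →ₗ[R] E n), ∀ n, Function.Injective (em n) := by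
      have hW := fun n : ℕ => exists_injEmb R (R ⧸ (c n).1)
      choose E acg mod hInj em hem using hW
      exact ⟨E, acg, mod, hInj, em, hem⟩
    letI : ∀ n, AddCommGroup (E n) := acg
    letI : ∀ n, Module R (E n) := mod
    have hMinj : Module.Injective R (⨁ n, E n) := h1 _ (mininjective_directSum E hInj)
    set fval : ↥Kω → ⨁ n, E n := fun x =>
      DFinsupp.mk (Finset.range (Classical.choose (hmem x) + 1))
        (fun n => em ↑n (Submodule.Quotient.mk ↑x)) with hfvaldef
    have hfval : ∀ (x : ↥Kω) (n : ℕ),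
        fval x n = em n (Submodule.Quotient.mk ↑x) := by
      intro x n
      show (DFinsupp.mk _ _) n = _
      rw [DFinsupp.mk_apply]
      split_ifs with hn
      · rfl
      · have h3 : (x : R) ∈ (c n).1 := by
          refine hmono.monotone (show Classical.choose (hmem x) ≤ n by
            by_contra h4
            exact hn (Finset.mem_range.mpr (by omega))) (Classical.choose_spec (hmem x))
        have h4 : (Submodule.Quotient.mk ↑x : R ⧸ (c n).1) = 0 :=
          (Submodule.Quotient.mk_eq_zero _).mpr h3
        rw [h4, map_zero]
    set f : ↥Kω →ₗ[R] ⨁ n, E n :=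
      { toFun := fval
        map_add' := by
          intro x y
          refine DFinsupp.ext fun n => ?_
          rw [DFinsupp.add_apply, hfval, hfval, hfval, Submodule.coe_add,
            Submodule.Quotient.mk_add, map_add]
        map_smul' := by
          intro r x
          refine DFinsupp.ext fun n => ?_
          rw [RingHom.id_apply, DFinsupp.smul_apply, hfval, hfval, Submodule.coe_smul,
            Submodule.Quotient.mk_smul, map_smul] } with hfdef
    obtain ⟨g, hg⟩ := hMinj.out Kω.subtype (Submodule.injective_subtype _) f
    set m : ⨁ n, E n := g 1 with hm
    obtain ⟨t, ht⟩ := m.support'.out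
    set n₁ : ℕ := t.toFinset.sup id + 1 with hn₁
    have hmn : m n₁ = 0 := by
      refine (ht n₁).resolve_left fun h => ?_
      have h2 : id n₁ ≤ t.toFinset.sup id := Finset.le_sup (f := id) (Multiset.mem_toFinset.mpr h)
      simp only [id] at h2
      omega
    have hsub : Kω ≤ (c n₁).1 := by
      intro x hx
      have h5 : g x = f ⟨x, hx⟩ := hg ⟨x, hx⟩
      have h6 : g x = x • m := by
        have h7 : g x = g (x • (1 : R)) := by rw [smul_eq_mul, mul_one]
        rw [h7, map_smul, ← hm]
      have h10 : f ⟨x, hx⟩ n₁ = em n₁ (Submodule.Quotient.mk x) := hfval ⟨x, hx⟩ n₁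
      have h8 : em n₁ (Submodule.Quotient.mk x) = 0 := by
        rw [← h10, ← h5, h6, DFinsupp.smul_apply, hmn, smul_zero]
      have h9 : (Submodule.Quotient.mk x : R ⧸ (c n₁).1) = 0 :=
        hem n₁ (by rw [h8, map_zero])
      exact (Submodule.Quotient.mk_eq_zero _).mp h9
    have h11 : (c (n₁ + 1)).1 ≤ (c n₁).1 :=
      le_trans (le_iSup (fun n => (c n).1) (n₁ + 1)) hsub
    exact absurd (lt_of_lt_of_le (hmono (Nat.lt_succ_self n₁)) h11) (lt_irrefl _)
  exact Module.finitePresentation_of_surjective π hπs hker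

end Helpers5

open MulOpposite in
/-- Every mininjective left `R`-module is injective iff the product
`F = ∏ (R/aR)⁺`, taken over all `a` with `Ra` a minimal left ideal, is indigent and `R` is
left min-coherent. -/
theorem mininjective_injective_iff_indigent (R : Type u) [Ring R] :
    (∀ (M : Type u) [AddCommGroup M] [Module R M],
        IsMininjectiveLeft R M → Module.Injective R M) ↔
      (Indigent.{u, u, u, u} R
          ((a : {a : R // IsAtom (Submodule.span R ({a} : Set R))}) →
            CharacterDual (R ⧸ Submodule.span Rᵐᵒᵖ ({(a : R)} : Set R))) ∧
        ∀ I : Submodule R R, IsAtom I → Module.FinitePresentation R ↥I) := by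
  constructor
  · intro h1
    refine ⟨?_, fun I hI => finitePresentation_of_mininjective_injective h1 I hI⟩
    intro N _ _
    constructor
    · intro hsub
      exact h1 N (mininjective_of_subinjective_F hsub)
    · intro hN
      exact subinjective_of_injective hN
  · rintro ⟨hInd, _⟩ M _ _ hM
    exact (hInd M).mp (subinjective_F_of_mininjective hM)
end Helpers3
end

section
/- Let R be a right PS-ring such that every mininjective right R-module is injective. Then R is right hereditary, right Artinian, and a right GV-ring. -/
universe u v w v'

open MulOpposite

section AuxProofPS
variable {R : Type u} [Ring R]

private lemma aux_mininj_of_inj {M : Type u} [AddCommGroup M] [Module Rᵐᵒᵖ M]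
    (hM : Module.Injective Rᵐᵒᵖ M) : IsMininjective R M := fun I _ f =>
  hM.out I.subtype I.injective_subtype f

private lemma aux_mininj_quotient
    (hPS : ∀ I : Submodule Rᵐᵒᵖ R, IsAtom I → Module.Projective Rᵐᵒᵖ ↥I)
    {M : Type u} [AddCommGroup M] [Module Rᵐᵒᵖ M]
    (hM : IsMininjective R M) (N : Submodule Rᵐᵒᵖ M) : IsMininjective R (M ⧸ N) := by
  intro I hI f
  have := hPS I hI
  obtain ⟨f', hf'⟩ := Module.projective_lifting_property N.mkQ f (Submodule.mkQ_surjective N)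
  obtain ⟨g', hg'⟩ := hM I hI f'
  refine ⟨N.mkQ ∘ₗ g', fun x => ?_⟩
  have : N.mkQ (f' x) = f x := by rw [← hf']; rfl
  simp [hg' x, this]

private lemma aux_hom_atom {M : Type u} [AddCommGroup M] [Module Rᵐᵒᵖ M]
    {I : Submodule Rᵐᵒᵖ R} (hI : IsAtom I) (f : ↥I →ₗ[Rᵐᵒᵖ] M) (hf : f ≠ 0) :
    Function.Injective f ∧ IsAtom (LinearMap.range f) := by
  have hs : IsSimpleModule Rᵐᵒᵖ ↥I := isSimpleModule_iff_isAtom.2 hI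
  have hker : LinearMap.ker f = ⊥ := by
    rcases eq_bot_or_eq_top (LinearMap.ker f) with h | h
    · exact h
    · exact absurd (LinearMap.ker_eq_top.1 h) hf
  have hinj : Function.Injective f := LinearMap.ker_eq_bot.1 hker
  have : IsSimpleModule Rᵐᵒᵖ ↥(LinearMap.range f) :=
    IsSimpleModule.congr (LinearEquiv.ofInjective f hinj).symm
  exact ⟨hinj, isSimpleModule_iff_isAtom.1 this⟩

private lemma aux_mininj_of_no_hom {M : Type u} [AddCommGroup M] [Module Rᵐᵒᵖ M]
    (hz : ∀ I : Submodule Rᵐᵒᵖ R, IsAtom I → ∀ f : ↥I →ₗ[Rᵐᵒᵖ] M, f = 0) :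
    IsMininjective R M :=
  fun I hI f => ⟨0, fun x => by rw [hz I hI f]; rfl⟩

private lemma aux_semiartinian
    (h : ∀ (M : Type u) [AddCommGroup M] [Module Rᵐᵒᵖ M],
        IsMininjective R M → Module.Injective Rᵐᵒᵖ M)
    (M : Type u) [AddCommGroup M] [Module Rᵐᵒᵖ M] [Nontrivial M] :
    ∃ m : Submodule Rᵐᵒᵖ M, IsAtom m := by
  by_contra hno
  push_neg at hno
  have hinj : ∀ N : Submodule Rᵐᵒᵖ M, Module.Injective Rᵐᵒᵖ ↥N := by
    intro N
    refine h ↥N (aux_mininj_of_no_hom fun I hI f => ?_)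
    by_contra hf
    have hnz : N.subtype ∘ₗ f ≠ 0 := by
      intro hc
      apply hf
      ext x
      have : N.subtype (f x) = 0 := by rw [← LinearMap.comp_apply, hc]; rfl
      simpa using this
    exact hno _ (aux_hom_atom hI (N.subtype ∘ₗ f) hnz).2
  have hss : IsSemisimpleModule Rᵐᵒᵖ M := by
    refine (isSemisimpleModule_iff ..).2 ⟨?_⟩
    intro N
    obtain ⟨g, hg⟩ := (hinj N).out N.subtype N.injective_subtype LinearMap.id
    exact ⟨LinearMap.ker g, LinearMap.isCompl_of_proj fun x => hg x⟩
  obtain ⟨a, ha, -⟩ := (eq_bot_or_exists_atom_le (⊤ : Submodule Rᵐᵒᵖ M)).resolve_left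
    (bot_ne_top (α := Submodule Rᵐᵒᵖ M)).symm
  exact hno a ha

private lemma aux_exists_embedding (M : Type u) [AddCommGroup M] [Module Rᵐᵒᵖ M] :
    ∃ (E : Type u) (_ : AddCommGroup E) (_ : Module Rᵐᵒᵖ E) (i : M →ₗ[Rᵐᵒᵖ] E),
      Module.Injective Rᵐᵒᵖ E ∧ Function.Injective i := by
  have : CategoryTheory.EnoughInjectives (ModuleCat.{u} Rᵐᵒᵖ) := inferInstance
  set X : ModuleCat.{u} Rᵐᵒᵖ := ModuleCat.of Rᵐᵒᵖ M
  let E := CategoryTheory.Injective.under X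
  have hEinj : CategoryTheory.Injective (ModuleCat.of Rᵐᵒᵖ ↥E) :=
    CategoryTheory.Injective.injective_under X
  let i : X ⟶ E := CategoryTheory.Injective.ι X
  have hmono : CategoryTheory.Mono i := inferInstance
  refine ⟨E, inferInstance, inferInstance, i.hom, ?_, ?_⟩
  · exact Module.injective_module_of_injective_object Rᵐᵒᵖ E
  · exact (ModuleCat.mono_iff_injective i).1 hmono

private lemma aux_projR : Module.Projective Rᵐᵒᵖ R := by
  let i : R →ₗ[Rᵐᵒᵖ] Rᵐᵒᵖ :=
    { toFun := op
      map_add' := fun x y => by simp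
      map_smul' := fun a x => by simp only [RingHom.id_apply]; rfl }
  let s : Rᵐᵒᵖ →ₗ[Rᵐᵒᵖ] R :=
    { toFun := unop
      map_add' := fun x y => by simp
      map_smul' := fun a x => by simp only [RingHom.id_apply]; rfl }
  exact Module.Projective.of_split i s (by ext; rfl)

private lemma aux_noetherian
    (h : ∀ (M : Type u) [AddCommGroup M] [Module Rᵐᵒᵖ M],
        IsMininjective R M → Module.Injective Rᵐᵒᵖ M) :
    IsNoetherian Rᵐᵒᵖ R := by
  rw [← monotone_stabilizes_iff_noetherian]
  intro c
  set I : Submodule Rᵐᵒᵖ R := ⨆ n, c n with hI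
  set A : ℕ → Type u := fun n => ↥I ⧸ (Submodule.comap I.subtype (c n)) with hA
  have hemb : ∀ n : ℕ, ∃ (E : Type u) (_ : AddCommGroup E) (_ : Module Rᵐᵒᵖ E)
      (i : A n →ₗ[Rᵐᵒᵖ] E), Module.Injective Rᵐᵒᵖ E ∧ Function.Injective i :=
    fun n => aux_exists_embedding (R := R) (A n)
  choose E instAdd instMod emb hEinj hembinj using hemb
  letI : ∀ n, AddCommGroup (E n) := instAdd
  letI : ∀ n, Module Rᵐᵒᵖ (E n) := instMod
  set T : Submodule Rᵐᵒᵖ (∀ n, E n) :=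
    { carrier := {v | ∃ m, ∀ n, m ≤ n → v n = 0}
      add_mem' := by
        rintro a b ⟨m, hm⟩ ⟨m', hm'⟩
        exact ⟨max m m', fun n hn => by
          simp [Pi.add_apply, hm n (le_trans (le_max_left _ _) hn),
            hm' n (le_trans (le_max_right _ _) hn)]⟩
      zero_mem' := ⟨0, fun n _ => rfl⟩
      smul_mem' := by
        rintro a v ⟨m, hm⟩
        exact ⟨m, fun n hn => by simp [Pi.smul_apply, hm n hn]⟩ } with hT
  have hmem : ∀ x : ↥I, (fun n => emb n (Submodule.Quotient.mk x) : ∀ n, E n) ∈ T := by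
    intro x
    have hx : (x : R) ∈ ⨆ n, c n := x.2
    obtain ⟨m, hm⟩ := (Submodule.mem_iSup_of_directed _ (c.monotone.directed_le)).1 hx
    refine ⟨m, fun n hn => ?_⟩
    have hxn : (x : R) ∈ c n := c.monotone hn hm
    have h0 : (Submodule.Quotient.mk x : A n) = 0 := by
      rw [Submodule.Quotient.mk_eq_zero]
      exact hxn
    show emb n (Submodule.Quotient.mk x) = 0
    rw [h0, map_zero]
  set f : ↥I →ₗ[Rᵐᵒᵖ] ↥T :=
    LinearMap.codRestrict T
      (LinearMap.pi fun n => emb n ∘ₗ (Submodule.comap I.subtype (c n)).mkQ) hmem with hf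
  have hTmin : IsMininjective R ↥T := by
    intro K hK g
    have hs : IsSimpleModule Rᵐᵒᵖ ↥K := isSimpleModule_iff_isAtom.2 hK
    have : Nontrivial ↥K := IsSimpleModule.nontrivial Rᵐᵒᵖ ↥K
    obtain ⟨k0, hk0⟩ := exists_ne (0 : ↥K)
    obtain ⟨m, hm⟩ := (g k0).2
    have hvan : ∀ x : ↥K, ∀ n, m ≤ n → ((g x : ∀ n, E n) n) = 0 := by
      intro x n hn
      have hx : x ∈ Submodule.span Rᵐᵒᵖ {k0} := by
        rw [IsSimpleModule.span_singleton_eq_top Rᵐᵒᵖ hk0]; trivial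
      obtain ⟨a, rfl⟩ := Submodule.mem_span_singleton.1 hx
      have h1 : g (a • k0) = a • g k0 := map_smul g a k0
      rw [h1]
      have h2 : ((a • g k0 : ↥T) : ∀ n, E n) n = a • ((g k0 : ∀ n, E n) n) := rfl
      rw [h2, hm n hn, smul_zero]
    have hext : ∀ n, ∃ H : R →ₗ[Rᵐᵒᵖ] E n,
        ∀ x : ↥K, H (x : R) = (g x : ∀ n, E n) n := by
      intro n
      obtain ⟨H, hH⟩ := (hEinj n).out K.subtype K.injective_subtype
        ((LinearMap.proj n) ∘ₗ T.subtype ∘ₗ g)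
      exact ⟨H, fun x => hH x⟩
    choose H hH using hext
    set G0 : R →ₗ[Rᵐᵒᵖ] (∀ n, E n) :=
      LinearMap.pi (fun n => if n < m then H n else 0) with hG0
    refine ⟨LinearMap.codRestrict T G0 (by
      intro r
      refine ⟨m, fun n hn => ?_⟩
      have : G0 r n = (if n < m then H n else 0) r := rfl
      rw [this, if_neg (Nat.not_lt.2 hn)]
      rfl), fun x => ?_⟩
    apply Subtype.ext
    funext n
    show G0 (x : R) n = (g x : ∀ n, E n) n
    have : G0 (x : R) n = (if n < m then H n else 0) (x : R) := rfl
    rw [this]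
    by_cases hnm : n < m
    · rw [if_pos hnm, hH n x]
    · rw [if_neg hnm, hvan x n (Nat.not_lt.1 hnm)]
      rfl
  have hTinj : Module.Injective Rᵐᵒᵖ ↥T := h ↥T hTmin
  obtain ⟨φ, hφ⟩ := hTinj.out I.subtype I.injective_subtype f
  obtain ⟨m, hm⟩ := (φ 1).2
  have hIle : ∀ n, m ≤ n → ∀ r, r ∈ I → r ∈ c n := by
    intro n hn r hr
    have key : ((f ⟨r, hr⟩ : ∀ k, E k) n) = 0 := by
      have h1 : φ r = f ⟨r, hr⟩ := hφ ⟨r, hr⟩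
      have hr1 : (op r) • (1 : R) = r := by simp
      have h2 : φ ((op r) • (1 : R)) = (op r) • (φ 1) := map_smul φ _ _
      rw [hr1] at h2
      have h3 : ((φ r : ∀ k, E k) n) = (op r) • ((φ 1 : ∀ k, E k) n) := by rw [h2]; rfl
      rw [← h1, h3, hm n hn, smul_zero]
    have hkey : emb n (Submodule.Quotient.mk ⟨r, hr⟩) = 0 := key
    have hq : (Submodule.Quotient.mk (⟨r, hr⟩ : ↥I) : A n) = 0 := by
      apply hembinj n
      rw [hkey, map_zero]
    have := (Submodule.Quotient.mk_eq_zero _).1 hq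
    simpa using this
  refine ⟨m, fun n hn => ?_⟩
  have h1 : c n = I := le_antisymm (le_iSup c n) (fun r hr => hIle n hn r hr)
  have h2 : c m = I := le_antisymm (le_iSup c m) (fun r hr => hIle m le_rfl r hr)
  rw [h1, h2]

private lemma aux_artinian
    (hNoeth : IsNoetherian Rᵐᵒᵖ R)
    (hSemiart : ∀ (M : Type u) [AddCommGroup M] [Module Rᵐᵒᵖ M] [Nontrivial M],
      ∃ m : Submodule Rᵐᵒᵖ M, IsAtom m) :
    IsArtinian Rᵐᵒᵖ R := by
  have hwf : WellFoundedGT (Submodule Rᵐᵒᵖ R) := inferInstance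
  have claim : ∀ N : Submodule Rᵐᵒᵖ R, IsArtinian Rᵐᵒᵖ (R ⧸ N) := by
    intro N
    induction N using WellFoundedGT.induction with
    | _ N IH =>
      by_cases hN : N = ⊤
      · subst hN
        have : Subsingleton (R ⧸ (⊤ : Submodule Rᵐᵒᵖ R)) :=
          Submodule.Quotient.subsingleton_iff.2 rfl
        have : Finite (R ⧸ (⊤ : Submodule Rᵐᵒᵖ R)) := Finite.of_subsingleton
        exact isArtinian_of_finite
      · have hlt : N < ⊤ := lt_of_le_of_ne le_top hN
        have hnt : Nontrivial (R ⧸ N) := Submodule.Quotient.nontrivial_iff.2 (ne_of_lt hlt)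
        set s : Set (Submodule Rᵐᵒᵖ (R ⧸ N)) := {m | IsSimpleModule Rᵐᵒᵖ ↥m} with hs
        set S : Submodule Rᵐᵒᵖ (R ⧸ N) := ⨆ m ∈ s, m with hS
        have hSss : IsSemisimpleModule Rᵐᵒᵖ ↥S :=
          isSemisimpleModule_biSup_of_isSemisimpleModule_submodule
            (fun m hm => by
              have : IsSimpleModule Rᵐᵒᵖ ↥m := hm
              infer_instance)
        have hSne : S ≠ ⊥ := by
          obtain ⟨a, ha⟩ := hSemiart (R ⧸ N)
          have has : a ∈ s := isSimpleModule_iff_isAtom.2 ha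
          have : a ≤ S := le_biSup (fun m => m) has
          intro hbot
          exact ha.1 (le_bot_iff.1 (hbot ▸ this))
        set N' : Submodule Rᵐᵒᵖ R := Submodule.comap N.mkQ S with hN'
        have hNle : N ≤ N' := fun x hx => by
          have : N.mkQ x = 0 := (Submodule.Quotient.mk_eq_zero N).2 hx
          show N.mkQ x ∈ S
          rw [this]; exact zero_mem S
        have hmapN' : Submodule.map N.mkQ N' = S :=
          Submodule.map_comap_eq_of_surjective (Submodule.mkQ_surjective N) S
        have hNlt : N < N' := by
          refine lt_of_le_of_ne hNle fun he => ?_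
          apply hSne
          rw [← hmapN', ← he]
          apply le_bot_iff.1
          intro y hy
          obtain ⟨x, hx, rfl⟩ := hy
          have hz : N.mkQ x = 0 := (Submodule.Quotient.mk_eq_zero N).2 hx
          rw [hz]
          exact Submodule.zero_mem ⊥
        have hart' : IsArtinian Rᵐᵒᵖ (R ⧸ N') := IH N' hNlt
        have hSnoeth : IsNoetherian Rᵐᵒᵖ ↥S := inferInstance
        have hSart : IsArtinian Rᵐᵒᵖ ↥S :=
          (IsSemisimpleModule.finite_tfae.out 1 2).1 hSnoeth
        have e : ((R ⧸ N) ⧸ S) ≃ₗ[Rᵐᵒᵖ] (R ⧸ N') := by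
          have := Submodule.quotientQuotientEquivQuotient N N' hNle
          rw [← hmapN']
          exact this
        have : IsArtinian Rᵐᵒᵖ ((R ⧸ N) ⧸ S) := isArtinian_of_linearEquiv e.symm
        exact (isArtinian_iff_submodule_quotient S).2 ⟨hSart, this⟩
  have : IsArtinian Rᵐᵒᵖ (R ⧸ (⊥ : Submodule Rᵐᵒᵖ R)) := claim ⊥
  exact isArtinian_of_linearEquiv (Submodule.quotEquivOfEqBot (⊥ : Submodule Rᵐᵒᵖ R) rfl)

private lemma aux_hereditary
    (hPS : ∀ I : Submodule Rᵐᵒᵖ R, IsAtom I → Module.Projective Rᵐᵒᵖ ↥I)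
    (h : ∀ (M : Type u) [AddCommGroup M] [Module Rᵐᵒᵖ M],
        IsMininjective R M → Module.Injective Rᵐᵒᵖ M)
    (I : Submodule Rᵐᵒᵖ R) : Module.Projective Rᵐᵒᵖ ↥I := by
  classical
  set F := (↥I →₀ Rᵐᵒᵖ) with hF
  set p : F →ₗ[Rᵐᵒᵖ] ↥I := Finsupp.linearCombination Rᵐᵒᵖ id with hp'
  have hp : Function.Surjective p := Finsupp.linearCombination_id_surjective Rᵐᵒᵖ ↥I
  set K := LinearMap.ker p with hK
  obtain ⟨E, _, _, i', hEinj, hi'⟩ := aux_exists_embedding (R := R) ↥K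
  set K' := LinearMap.range i' with hK'
  have hQinj : Module.Injective Rᵐᵒᵖ (E ⧸ K') :=
    h _ (aux_mininj_quotient hPS (aux_mininj_of_inj hEinj) K')
  obtain ⟨φ, hφ⟩ := hEinj.out (X := ↥K) (Y := F) K.subtype K.injective_subtype i'
  set q : F →ₗ[Rᵐᵒᵖ] (E ⧸ K') := K'.mkQ ∘ₗ φ with hq
  have hker_le : K ≤ LinearMap.ker q := by
    intro x hx
    have h1 : φ x = i' ⟨x, hx⟩ := hφ ⟨x, hx⟩
    have h2 : φ x ∈ K' := h1 ▸ LinearMap.mem_range_self i' ⟨x, hx⟩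
    show K'.mkQ (φ x) = 0
    exact (Submodule.Quotient.mk_eq_zero K').2 h2
  set eqv : (F ⧸ K) ≃ₗ[Rᵐᵒᵖ] ↥I := p.quotKerEquivOfSurjective hp with heqv'
  have heqv : ∀ x : F, eqv (Submodule.Quotient.mk x) = p x := by
    intro x
    simp only [heqv', LinearMap.quotKerEquivOfSurjective, LinearEquiv.trans_apply]
    rw [show ((LinearEquiv.ofTop (LinearMap.range p) _) (p.quotKerEquivRange (Submodule.Quotient.mk x)) : ↥I)
      = ((p.quotKerEquivRange (Submodule.Quotient.mk x) : ↥(LinearMap.range p))) from rfl]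
    rw [LinearMap.quotKerEquivRange_apply_mk]
  have hsymm : ∀ x : F, eqv.symm (p x) = Submodule.Quotient.mk x := by
    intro x
    apply eqv.injective
    rw [LinearEquiv.apply_symm_apply, heqv]
  set ψ : ↥I →ₗ[Rᵐᵒᵖ] (E ⧸ K') := (K.liftQ q hker_le) ∘ₗ (eqv.symm : ↥I →ₗ[Rᵐᵒᵖ] F ⧸ K)
    with hψ'
  have hψ : ∀ x : F, ψ (p x) = q x := by
    intro x
    show (K.liftQ q hker_le) (eqv.symm (p x)) = q x
    rw [hsymm x, Submodule.liftQ_apply]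
  obtain ⟨Ψ, hΨ⟩ := hQinj.out I.subtype I.injective_subtype ψ
  have hprojR : Module.Projective Rᵐᵒᵖ R := aux_projR
  obtain ⟨Θ, hΘ⟩ := Module.projective_lifting_property K'.mkQ Ψ (Submodule.mkQ_surjective K')
  set r0 : F →ₗ[Rᵐᵒᵖ] E := φ - (Θ ∘ₗ I.subtype ∘ₗ p) with hr0'
  have hr0mem : ∀ x : F, r0 x ∈ K' := by
    intro x
    have h1 : K'.mkQ (r0 x) = q x - K'.mkQ (Θ ((p x : R))) := by
      simp [hr0', hq, map_sub]
    have h2 : K'.mkQ (Θ ((p x : R))) = Ψ ((p x : R)) := by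
      rw [← hΘ]; rfl
    have h3 : Ψ ((p x : R)) = ψ (p x) := hΨ (p x)
    have : K'.mkQ (r0 x) = 0 := by rw [h1, h2, h3, hψ x, sub_self]
    exact (Submodule.Quotient.mk_eq_zero K').1 this
  have hr0K : ∀ x : ↥K, r0 (x : F) = i' x := by
    intro x
    have hpx : p (x : F) = 0 := x.2
    have : r0 (x : F) = φ (x : F) - Θ ((p (x : F) : R)) := rfl
    rw [this, hpx]
    have h0 : Θ ((0 : ↥I) : R) = 0 := by simp
    rw [h0, sub_zero]
    exact hφ x
  set e := LinearEquiv.ofInjective i' hi' with he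
  set r1 : F →ₗ[Rᵐᵒᵖ] ↥K := (e.symm : ↥K' →ₗ[Rᵐᵒᵖ] ↥K) ∘ₗ
    (LinearMap.codRestrict K' r0 hr0mem) with hr1'
  have hr1 : ∀ x : ↥K, r1 (x : F) = x := by
    intro x
    show e.symm (LinearMap.codRestrict K' r0 hr0mem (x : F)) = x
    apply e.injective
    rw [LinearEquiv.apply_symm_apply]
    apply Subtype.ext
    show r0 (x : F) = (e x : E)
    rw [hr0K x]
    rfl
  set uu : F →ₗ[Rᵐᵒᵖ] F := LinearMap.id - K.subtype ∘ₗ r1 with huu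
  have hpu : ∀ x, p (uu x) = p x := by
    intro x
    have hmem : (r1 x : F) ∈ K := (r1 x).2
    have : p ((r1 x : F)) = 0 := hmem
    simp [huu, map_sub, this]
  have hkeru : K ≤ LinearMap.ker uu := by
    intro x hx
    show uu x = 0
    have : uu x = x - (r1 x : F) := rfl
    rw [this, hr1 ⟨x, hx⟩]
    simp
  set sec : ↥I →ₗ[Rᵐᵒᵖ] F := (K.liftQ uu hkeru) ∘ₗ (eqv.symm : ↥I →ₗ[Rᵐᵒᵖ] F ⧸ K)
  have hsec : p.comp sec = LinearMap.id := by
    apply LinearMap.ext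
    intro y
    obtain ⟨x, rfl⟩ := hp y
    show p (sec (p x)) = p x
    have : sec (p x) = uu x := by
      show (K.liftQ uu hkeru) (eqv.symm (p x)) = uu x
      rw [hsymm x, Submodule.liftQ_apply]
    rw [this, hpu]
  exact Module.Projective.of_split sec p hsec

end AuxProofPS

/-- If `R` is a right PS-ring and every mininjective right `R`-module is
injective, then `R` is right hereditary, right Artinian and a right GV-ring. -/
theorem hereditary_artinian_GV_of_PS (R : Type u) [Ring R]
    (hPS : ∀ I : Submodule Rᵐᵒᵖ R, IsAtom I → Module.Projective Rᵐᵒᵖ ↥I)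
    (h : ∀ (M : Type u) [AddCommGroup M] [Module Rᵐᵒᵖ M],
        IsMininjective R M → Module.Injective Rᵐᵒᵖ M) :
    (∀ I : Submodule Rᵐᵒᵖ R, Module.Projective Rᵐᵒᵖ ↥I) ∧
      IsArtinian Rᵐᵒᵖ R ∧ RightGVRing.{u, u} R := by
  have hered : ∀ I : Submodule Rᵐᵒᵖ R, Module.Projective Rᵐᵒᵖ ↥I := aux_hereditary hPS h
  have hNoeth : IsNoetherian Rᵐᵒᵖ R := aux_noetherian h
  have hArt : IsArtinian Rᵐᵒᵖ R :=
    aux_artinian hNoeth (fun M _ _ _ => aux_semiartinian h M)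
  refine ⟨hered, hArt, ?_⟩
  intro S _ _ hS
  by_cases hz : ∀ I : Submodule Rᵐᵒᵖ R, IsAtom I → ∀ f : ↥I →ₗ[Rᵐᵒᵖ] S, f = 0
  · exact Or.inl (h S (aux_mininj_of_no_hom hz))
  · push_neg at hz
    obtain ⟨I, hI, f, hf⟩ := hz
    obtain ⟨hinj, -⟩ := aux_hom_atom hI f hf
    have hsur : Function.Surjective f := by
      have hrange : LinearMap.range f = ⊤ := by
        rcases eq_bot_or_eq_top (LinearMap.range f) with h' | h'
        · exact absurd (LinearMap.range_eq_bot.1 h') hf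
        · exact h'
      exact LinearMap.range_eq_top.1 hrange
    have e : ↥I ≃ₗ[Rᵐᵒᵖ] S := LinearEquiv.ofBijective f ⟨hinj, hsur⟩
    have := hPS I hI
    exact Or.inr (Module.Projective.of_equiv e)
end
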